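/- arXiv:1710.04217 — 6 statements merged into one kernel-verified Lean document; each statement's English description precedes it below -/
import Mathlib

section
/- Let f, f_1, f_2, … : 𝐗 → ℝ be Borel functions, each μ-integrable, with f_k → f μ-almost everywhere, and suppose in addition there is g ∈ L¹(μ) with |f_k| ≤ g μ-almost everywhere for all k. Then F_k^{·}(f_k) → E_μ[f | 𝔍] in L¹(μ): ∫ |F_k^x(f_k) − E_μ[f | 𝔍](x)| μ(dx) → 0 as k → ∞. -/
open MeasureTheory Filter Topology
open scoped Pointwise

/-- The σ-algebra of Borel sets invariant under every transformation `T φ`. -/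
def invSigma {G X : Type*} [MeasurableSpace X] (T : G → X → X) : MeasurableSpace X where
  MeasurableSet' A := MeasurableSet A ∧ ∀ φ, T φ ⁻¹' A = A
  measurableSet_empty := ⟨MeasurableSet.empty, fun _ => Set.preimage_empty⟩
  measurableSet_compl A hA := ⟨hA.1.compl, fun φ => by
    rw [Set.preimage_compl, hA.2 φ]⟩
  measurableSet_iUnion s hs := ⟨MeasurableSet.iUnion fun i => (hs i).1, fun φ => by
    rw [Set.preimage_iUnion]
    exact Set.iUnion_congr fun i => (hs i).2 φ⟩

/-!
The Koopman operators `U φ u = u ∘ T φ` are contractions of `L²(μ)` with `U ψ ∘ U φ = U (φ ψ)`.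
The Følner average of a coboundary `u - U φ u` is small, since the two sums differ only over
`A_k Δ φ A_k`, while a vector orthogonal to every coboundary is fixed by every `U φ`. Hence the
averages converge in `L²` to the orthogonal projection onto the fixed vectors (von Neumann), and
the fixed vectors are exactly the `𝔍`-measurable classes, so this projection is `E_μ[· | 𝔍]`.
Averaging and conditional expectation contract `L¹`, which carries the convergence from the dense
subspace `L²` to `L¹`, and from `f` to `f_k`, as `f_k → f` in `L¹` by dominated convergence.
-/

def IsFolnerSeq {G : Type*} [Group G] [DecidableEq G] (A : ℕ → Finset G) : Prop :=
  ∀ φ : G,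
    Tendsto (fun k => ((((A k).image fun g => φ * g) ∩ A k).card : ℝ) / (A k).card) atTop (𝓝 1)

section FinsetAverage

variable {G 𝕜 E : Type*} [RCLike 𝕜] [NormedAddCommGroup E] [InnerProductSpace 𝕜 E]

def finsetAverage (U : G → E →L[𝕜] E) (s : Finset G) : E →L[𝕜] E :=
  (s.card : 𝕜)⁻¹ • ∑ φ ∈ s, U φ

def coboundarySpan (U : G → E →L[𝕜] E) : Submodule 𝕜 E :=
  Submodule.span 𝕜 (⋃ φ, Set.range fun u => u - U φ u)

variable {U : G → E →L[𝕜] E}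

theorem finsetAverage_apply (s : Finset G) (u : E) :
    finsetAverage U s u = (s.card : 𝕜)⁻¹ • ∑ φ ∈ s, U φ u := by
  simp [finsetAverage]

theorem norm_sum_apply_le_card_mul (hU : ∀ φ, ‖U φ‖ ≤ 1) (s : Finset G) (u : E) :
    ‖∑ φ ∈ s, U φ u‖ ≤ s.card * ‖u‖ :=
  (norm_sum_le _ _).trans <| by
    simpa using Finset.sum_le_sum fun φ _ => (U φ).le_of_opNorm_le (hU φ) u

theorem norm_finsetAverage_le (hU : ∀ φ, ‖U φ‖ ≤ 1) (s : Finset G) :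
    ‖finsetAverage U s‖ ≤ 1 := by
  refine ContinuousLinearMap.opNorm_le_bound _ zero_le_one fun u => ?_
  rcases s.eq_empty_or_nonempty with rfl | hs
  · simp [finsetAverage_apply]
  have hcard : (0 : ℝ) < s.card := by exact_mod_cast hs.card_pos
  rw [finsetAverage_apply, norm_smul, norm_inv, RCLike.norm_natCast, one_mul,
    inv_mul_le_iff₀ hcard]
  exact norm_sum_apply_le_card_mul hU s u

theorem finsetAverage_apply_of_forall_eq {s : Finset G} (hs : s.Nonempty) {u : E}
    (hu : ∀ φ, U φ u = u) : finsetAverage U s u = u := by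
  have hcard : (s.card : 𝕜) ≠ 0 := by exact_mod_cast hs.card_pos.ne'
  simp [finsetAverage_apply, hu, ← Nat.cast_smul_eq_nsmul 𝕜, smul_smul, hcard]

theorem norm_finsetAverage_apply_sub_le [Group G] [DecidableEq G] (hU : ∀ φ, ‖U φ‖ ≤ 1)
    (hmul : ∀ φ ψ u, U ψ (U φ u) = U (φ * ψ) u) (s : Finset G) (φ : G) (u : E) :
    ‖finsetAverage U s (u - U φ u)‖ ≤
      2 * (1 - (((s.image fun g => φ * g) ∩ s).card : ℝ) / s.card) * ‖u‖ := by
  rcases s.eq_empty_or_nonempty with rfl | hs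
  · simp [finsetAverage_apply]
  set t := s.image fun g => φ * g
  have ht : t.card = s.card := Finset.card_image_of_injective _ (mul_right_injective φ)
  -- translating by `φ` cancels the terms indexed by `s ∩ φ s`
  have hsum : ∑ ψ ∈ s, U ψ (u - U φ u) = ∑ ψ ∈ s \ t, U ψ u - ∑ ψ ∈ t \ s, U ψ u := by
    rw [Finset.sum_sdiff_sub_sum_sdiff, Finset.sum_image fun a _ b _ h => mul_left_cancel h]
    simp [hmul, Finset.sum_sub_distrib]
  have hst : ((s \ t).card : ℝ) = s.card - (t ∩ s).card := by
    rw [← Finset.card_sdiff_add_card_inter s t, Finset.inter_comm]; push_cast; ring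
  have hts : ((t \ s).card : ℝ) = s.card - (t ∩ s).card := by
    rw [← ht, ← Finset.card_sdiff_add_card_inter t s]; push_cast; ring
  have hcard : (0 : ℝ) < s.card := by exact_mod_cast hs.card_pos
  rw [finsetAverage_apply, hsum, norm_smul, norm_inv, RCLike.norm_natCast,
    inv_mul_le_iff₀ hcard]
  calc ‖∑ ψ ∈ s \ t, U ψ u - ∑ ψ ∈ t \ s, U ψ u‖
      ≤ (s \ t).card * ‖u‖ + (t \ s).card * ‖u‖ :=
        (norm_sub_le _ _).trans <|
          add_le_add (norm_sum_apply_le_card_mul hU _ u) (norm_sum_apply_le_card_mul hU _ u)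
    _ = s.card * (2 * (1 - (t ∩ s).card / s.card) * ‖u‖) := by
        rw [hst, hts]; field_simp; ring

theorem apply_eq_self_of_mem_orthogonal_coboundarySpan (hU : ∀ φ, ‖U φ‖ ≤ 1) {u : E}
    (hu : u ∈ (coboundarySpan U)ᗮ) (φ : G) : U φ u = u := by
  have hinner : inner 𝕜 (u - U φ u) u = 0 :=
    (Submodule.mem_orthogonal _ _).1 hu _
      (Submodule.subset_span (Set.mem_iUnion.2 ⟨φ, u, rfl⟩))
  have hle : ‖U φ u‖ ≤ ‖u‖ := ((U φ).le_of_opNorm_le (hU φ) u).trans_eq (one_mul _)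
  rw [inner_sub_left, sub_eq_zero] at hinner
  exact eq_of_norm_le_re_inner_eq_norm_sq (𝕜 := 𝕜) hle (by rw [← hinner, inner_self_eq_norm_sq])

theorem isClosed_setOf_tendsto_finsetAverage_zero (hU : ∀ φ, ‖U φ‖ ≤ 1) (A : ℕ → Finset G) :
    IsClosed {u | Tendsto (fun k => finsetAverage U (A k) u) atTop (𝓝 0)} :=
  (LipschitzWith.uniformEquicontinuous (fun k => finsetAverage U (A k)) 1 fun k =>
    (finsetAverage U (A k)).lipschitz.weaken (by exact_mod_cast norm_finsetAverage_le hU _))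
    |>.equicontinuous.isClosed_setOfPred_tendsto continuous_const

theorem tendsto_finsetAverage_zero_of_mem_coboundarySpan [Group G] [DecidableEq G]
    (hU : ∀ φ, ‖U φ‖ ≤ 1) (hmul : ∀ φ ψ u, U ψ (U φ u) = U (φ * ψ) u) {A : ℕ → Finset G}
    (hFolner : IsFolnerSeq A) {u : E} (hu : u ∈ coboundarySpan U) :
    Tendsto (fun k => finsetAverage U (A k) u) atTop (𝓝 0) := by
  induction hu using Submodule.span_induction with
  | mem w hw =>
    obtain ⟨φ, v, rfl⟩ := Set.mem_iUnion.1 hw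
    refine squeeze_zero_norm (fun k => norm_finsetAverage_apply_sub_le hU hmul (A k) φ v) ?_
    simpa using (((tendsto_const_nhds (x := (1 : ℝ))).sub (hFolner φ)).const_mul 2).mul_const
      ‖v‖
  | zero => simp
  | add v w _ _ hv hw => simpa using hv.add hw
  | smul c v _ hv => simpa using hv.const_smul c

theorem tendsto_finsetAverage_starProjection [CompleteSpace E] [Group G] [DecidableEq G]
    (hU : ∀ φ, ‖U φ‖ ≤ 1) (hmul : ∀ φ ψ u, U ψ (U φ u) = U (φ * ψ) u)
    (K : Submodule 𝕜 E) [K.HasOrthogonalProjection] (hK : ∀ u, u ∈ K ↔ ∀ φ, U φ u = u)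
    {A : ℕ → Finset G} (hA : ∀ k, (A k).Nonempty) (hFolner : IsFolnerSeq A) (u : E) :
    Tendsto (fun k => finsetAverage U (A k) u) atTop (𝓝 (K.starProjection u)) := by
  have hperp : Kᗮ ≤ (coboundarySpan U).topologicalClosure := by
    rw [← Submodule.orthogonal_orthogonal_eq_closure]
    exact Submodule.orthogonal_le fun v hv =>
      (hK v).2 (apply_eq_self_of_mem_orthogonal_coboundarySpan hU hv)
  have hzero : Tendsto (fun k => finsetAverage U (A k) (u - K.starProjection u)) atTop (𝓝 0) :=
    closure_minimal (fun v hv => tendsto_finsetAverage_zero_of_mem_coboundarySpan hU hmul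
      hFolner hv) (isClosed_setOf_tendsto_finsetAverage_zero hU A)
      (hperp (K.sub_starProjection_mem_orthogonal u))
  have hfix : ∀ k, finsetAverage U (A k) (K.starProjection u) = K.starProjection u := fun k =>
    finsetAverage_apply_of_forall_eq (hA k) ((hK _).1 (K.starProjection_apply_mem u))
  simpa [hfix] using hzero.const_add (K.starProjection u)

end FinsetAverage

section Integral

variable {X : Type*} {m m₀ : MeasurableSpace X} {μ : Measure[m₀] X}

theorem integral_abs_sub_le_add {a b c : X → ℝ}
    (ha : Integrable a μ) (hb : Integrable b μ) (hc : Integrable c μ) :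
    ∫ x, |a x - c x| ∂μ ≤ ∫ x, |a x - b x| ∂μ + ∫ x, |b x - c x| ∂μ := by
  refine (integral_mono (ha.sub hc).abs ((ha.sub hb).abs.add (hb.sub hc).abs) fun x =>
    abs_sub_le _ _ _).trans_eq ?_
  exact integral_add (ha.sub hb).abs (hb.sub hc).abs

theorem integral_abs_condExp_sub_le {f g : X → ℝ} (hf : Integrable f μ) (hg : Integrable g μ) :
    ∫ x, |μ[f | m] x - μ[g | m] x| ∂μ ≤ ∫ x, |f x - g x| ∂μ := by
  calc ∫ x, |μ[f | m] x - μ[g | m] x| ∂μ = ∫ x, |μ[f - g | m] x| ∂μ :=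
        integral_congr_ae <| (condExp_sub hf hg m).mono fun x hx => by simp [hx]
    _ ≤ ∫ x, |(f - g) x| ∂μ := integral_abs_condExp_le _
    _ = ∫ x, |f x - g x| ∂μ := rfl

theorem tendsto_integral_abs_sub_of_dominated_convergence {F : ℕ → X → ℝ} {f bound : X → ℝ}
    (hF : ∀ k, AEStronglyMeasurable (F k) μ) (hf : Integrable f μ) (hbound : Integrable bound μ)
    (hle : ∀ k, ∀ᵐ x ∂μ, |F k x| ≤ bound x)
    (hlim : ∀ᵐ x ∂μ, Tendsto (fun k => F k x) atTop (𝓝 (f x))) :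
    Tendsto (fun k => ∫ x, |F k x - f x| ∂μ) atTop (𝓝 0) := by
  simpa using tendsto_integral_of_dominated_convergence (F := fun k x => |F k x - f x|)
    (f := fun _ => 0) (fun x => bound x + |f x|)
    (fun k => ((hF k).sub hf.aestronglyMeasurable).norm) (hbound.add hf.abs)
    (fun k => (hle k).mono fun x hx => by
      rw [Real.norm_eq_abs, abs_abs]
      exact (abs_sub _ _).trans (by gcongr))
    (hlim.mono fun x hx => by simpa using (hx.sub_const (f x)).abs)

theorem exists_memLp_two_integral_abs_sub_lt [IsFiniteMeasure μ] {f : X → ℝ}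
    (hf : Integrable f μ) {ε : ℝ} (hε : 0 < ε) :
    ∃ g, MemLp g 2 μ ∧ ∫ x, |f x - g x| ∂μ < ε := by
  obtain ⟨g, hfg, -⟩ := (memLp_one_iff_integrable.2 hf).exists_simpleFunc_eLpNorm_sub_lt
    ENNReal.one_ne_top (ENNReal.ofReal_pos.2 hε).ne'
  refine ⟨g, (g.memLp_top μ).mono_exponent le_top, ?_⟩
  have hL1 : ∫ x, |f x - g x| ∂μ = (eLpNorm (f - ⇑g) 1 μ).toReal := by
    rw [eLpNorm_one_eq_lintegral_enorm,
      ← integral_norm_eq_lintegral_enorm (hf.1.sub g.aestronglyMeasurable)]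
    rfl
  exact hL1 ▸ ENNReal.toReal_lt_of_lt_ofReal hfg

theorem integral_norm_le_norm_Lp_two {E : Type*} [NormedAddCommGroup E] [IsProbabilityMeasure μ]
    (v : Lp E 2 μ) : ∫ x, ‖v x‖ ∂μ ≤ ‖v‖ := by
  rw [integral_norm_eq_lintegral_enorm (Lp.aestronglyMeasurable v),
    ← eLpNorm_one_eq_lintegral_enorm, Lp.norm_def]
  exact ENNReal.toReal_mono (Lp.eLpNorm_ne_top v)
    (eLpNorm_le_eLpNorm_of_exponent_le one_le_two (Lp.aestronglyMeasurable v))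

end Integral

section OrbitAverage

variable {G X : Type*} {T : G → X → X}

noncomputable def orbitAverage (T : G → X → X) (s : Finset G) (f : X → ℝ) (x : X) : ℝ :=
  (∑ φ ∈ s, f (T φ x)) / s.card

theorem orbitAverage_sub (s : Finset G) (f g : X → ℝ) (x : X) :
    orbitAverage T s (fun y => f y - g y) x = orbitAverage T s f x - orbitAverage T s g x := by
  simp [orbitAverage, Finset.sum_sub_distrib, sub_div]

theorem abs_orbitAverage_le (s : Finset G) (f : X → ℝ) (x : X) :
    |orbitAverage T s f x| ≤ orbitAverage T s (fun y => |f y|) x := by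
  rw [orbitAverage, orbitAverage, abs_div, Nat.abs_cast]
  gcongr
  exact Finset.abs_sum_le_sum_abs _ _

variable {m m₀ : MeasurableSpace X} {μ : Measure[m₀] X} {f g : X → ℝ}

theorem integrable_orbitAverage (hmp : ∀ φ, MeasurePreserving (T φ) μ μ) (s : Finset G)
    (hf : Integrable f μ) : Integrable (orbitAverage T s f) μ :=
  (integrable_finsetSum s fun φ _ => (hmp φ).integrable_comp_of_integrable hf).div_const _

theorem integral_orbitAverage (hmp : ∀ φ, MeasurePreserving (T φ) μ μ) {s : Finset G}
    (hs : s.Nonempty) (hf : Integrable f μ) :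
    ∫ x, orbitAverage T s f x ∂μ = ∫ x, f x ∂μ := by
  have hcomp : ∀ φ, ∫ x, f (T φ x) ∂μ = ∫ x, f x ∂μ := fun φ => by
    rw [← integral_map (hmp φ).aemeasurable (by rw [(hmp φ).map_eq]; exact hf.1),
      (hmp φ).map_eq]
  have hcard : (s.card : ℝ) ≠ 0 := by exact_mod_cast hs.card_pos.ne'
  simp only [orbitAverage]
  rw [integral_div, integral_finsetSum s (f := fun φ x => f (T φ x))
      fun φ _ => (hmp φ).integrable_comp_of_integrable hf,
    Finset.sum_congr rfl fun φ _ => hcomp φ, Finset.sum_const, nsmul_eq_mul,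
    mul_div_cancel_left₀ _ hcard]

theorem integral_abs_orbitAverage_sub_le (hmp : ∀ φ, MeasurePreserving (T φ) μ μ)
    {s : Finset G} (hs : s.Nonempty) (hf : Integrable f μ) (hg : Integrable g μ) :
    ∫ x, |orbitAverage T s f x - orbitAverage T s g x| ∂μ ≤ ∫ x, |f x - g x| ∂μ := by
  have hfg : Integrable (fun y => f y - g y) μ := hf.sub hg
  simp only [← orbitAverage_sub]
  refine (integral_mono (integrable_orbitAverage hmp s hfg).abs
    (integrable_orbitAverage hmp s hfg.abs) fun x => abs_orbitAverage_le s _ x).trans_eq ?_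
  exact integral_orbitAverage hmp hs hfg.abs

theorem integral_abs_orbitAverage_sub_condExp_le (hmp : ∀ φ, MeasurePreserving (T φ) μ μ)
    {s : Finset G} (hs : s.Nonempty) (hf : Integrable f μ) (hg : Integrable g μ) :
    ∫ x, |orbitAverage T s f x - μ[f | m] x| ∂μ ≤
      ∫ x, |orbitAverage T s g x - μ[g | m] x| ∂μ + 2 * ∫ x, |f x - g x| ∂μ := by
  have hfs := integrable_orbitAverage hmp s hf
  have hgs := integrable_orbitAverage hmp s hg
  have hswap : ∫ x, |g x - f x| ∂μ = ∫ x, |f x - g x| ∂μ := by simp_rw [abs_sub_comm]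
  have h₁ := integral_abs_sub_le_add hfs hgs (integrable_condExp (m := m) (f := f))
  have h₂ := integral_abs_sub_le_add hgs (integrable_condExp (m := m) (f := g))
    (integrable_condExp (m := m) (f := f))
  have h₃ := integral_abs_orbitAverage_sub_le hmp hs hf hg
  have h₄ := integral_abs_condExp_sub_le (m := m) hg hf
  linarith

end OrbitAverage

section InvariantSigma

variable {G X : Type*} [MeasurableSpace X] {T : G → X → X}

theorem invSigma_le : invSigma T ≤ ‹MeasurableSpace X› := fun _ hs => hs.1

theorem measurable_invSigma_iff {β : Type*} [MeasurableSpace β] [MeasurableSingletonClass β]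
    {h : X → β} : Measurable[invSigma T] h ↔ Measurable h ∧ ∀ φ x, h (T φ x) = h x := by
  refine ⟨fun hh => ⟨hh.mono invSigma_le le_rfl, fun φ x => ?_⟩, fun ⟨hh, hinv⟩ s hs =>
    ⟨hh hs, fun φ => by ext x; simp [hinv]⟩⟩
  have hx : x ∈ T φ ⁻¹' (h ⁻¹' {h x}) := by
    rw [(hh (measurableSet_singleton (h x))).2 φ]; rfl
  exact hx

variable [Group G] [Countable G] {μ : Measure X}

theorem aestronglyMeasurable_invSigma_of_ae_comp_eq (hTid : ∀ x, T 1 x = x)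
    (hTcomp : ∀ φ ψ x, T (φ * ψ) x = T φ (T ψ x)) (hmp : ∀ φ, MeasurePreserving (T φ) μ μ)
    {h : X → ℝ} (hh : AEStronglyMeasurable h μ) (hinv : ∀ φ, (fun x => h (T φ x)) =ᵐ[μ] h) :
    AEStronglyMeasurable[invSigma T] h μ := by
  obtain ⟨h₀, hsm₀, hh₀⟩ := hh
  have hm₀ : Measurable h₀ := hsm₀.measurable
  have hinv₀ : ∀ φ, (fun x => h₀ (T φ x)) =ᵐ[μ] h₀ := fun φ =>
    ((hmp φ).quasiMeasurePreserving.ae_eq_comp hh₀).symm.trans ((hinv φ).trans hh₀)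
  -- the set where `h₀` is constant along the whole orbit is invariant and of full measure
  set B := {x | ∀ φ, h₀ (T φ x) = h₀ x}
  have hB : MeasurableSet B := by
    simp only [B, Set.ofPred_forall]
    exact MeasurableSet.iInter fun φ => measurableSet_eq_fun (hm₀.comp (hmp φ).measurable) hm₀
  have hBae : ∀ᵐ x ∂μ, x ∈ B := ae_all_iff.2 hinv₀
  have hTinv : ∀ ψ x, T ψ⁻¹ (T ψ x) = x := fun ψ x => by rw [← hTcomp, inv_mul_cancel, hTid]
  have hBinv : ∀ ψ x, T ψ x ∈ B ↔ x ∈ B := fun ψ x => by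
    refine ⟨fun hx φ => ?_, fun hx φ => by rw [← hTcomp, hx, hx]⟩
    have hψ : h₀ x = h₀ (T ψ x) := by rw [← hx ψ⁻¹, hTinv]
    rw [hψ, ← hx (φ * ψ⁻¹), ← hTcomp, inv_mul_cancel_right]
  set h' := B.indicator h₀
  have hm' : Measurable[invSigma T] h' := by
    refine measurable_invSigma_iff.2 ⟨hm₀.indicator hB, fun ψ x => ?_⟩
    by_cases hx : x ∈ B
    · simp [h', hx, (hBinv ψ x).2 hx, hx ψ]
    · simp [h', hx, mt (hBinv ψ x).1 hx]
  refine ⟨h', hm'.stronglyMeasurable, hh₀.trans ?_⟩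
  filter_upwards [hBae] with x hx
  simp [h', hx]

end InvariantSigma

section Koopman

variable {G X : Type*} [MeasurableSpace X] {μ : Measure X} {T : G → X → X}

noncomputable def koopman (hmp : ∀ φ, MeasurePreserving (T φ) μ μ) (φ : G) :
    Lp ℝ 2 μ →L[ℝ] Lp ℝ 2 μ :=
  (Lp.compMeasurePreservingₗᵢ ℝ (T φ) (hmp φ)).toContinuousLinearMap

variable (hmp : ∀ φ, MeasurePreserving (T φ) μ μ)

theorem coeFn_koopman (φ : G) (u : Lp ℝ 2 μ) : koopman hmp φ u =ᵐ[μ] fun x => u (T φ x) :=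
  Lp.coeFn_compMeasurePreserving u (hmp φ)

theorem norm_koopman_le (φ : G) : ‖koopman hmp φ‖ ≤ 1 :=
  LinearIsometry.norm_toContinuousLinearMap_le _

theorem koopman_koopman [Group G] (hTcomp : ∀ φ ψ x, T (φ * ψ) x = T φ (T ψ x)) (φ ψ : G)
    (u : Lp ℝ 2 μ) : koopman hmp ψ (koopman hmp φ u) = koopman hmp (φ * ψ) u := by
  refine Lp.ext ((coeFn_koopman hmp ψ _).trans ?_)
  filter_upwards [(hmp ψ).quasiMeasurePreserving.ae_eq_comp (coeFn_koopman hmp φ u),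
    coeFn_koopman hmp (φ * ψ) u] with x hx hx'
  simp_all

theorem mem_lpMeas_invSigma_iff [Group G] [Countable G] (hTid : ∀ x, T 1 x = x)
    (hTcomp : ∀ φ ψ x, T (φ * ψ) x = T φ (T ψ x)) (u : Lp ℝ 2 μ) :
    u ∈ lpMeas ℝ ℝ (invSigma T) 2 μ ↔ ∀ φ, koopman hmp φ u = u := by
  rw [mem_lpMeas_iff_aestronglyMeasurable]
  refine ⟨fun ⟨h, hsm, hu⟩ φ => Lp.ext ?_, fun hu => ?_⟩
  · have hinv := (measurable_invSigma_iff.1 hsm.measurable).2 φ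
    filter_upwards [coeFn_koopman hmp φ u, (hmp φ).quasiMeasurePreserving.ae_eq_comp hu, hu]
      with x hx hxT hx'
    simp_all
  · exact aestronglyMeasurable_invSigma_of_ae_comp_eq hTid hTcomp hmp
      (Lp.aestronglyMeasurable u) fun φ => (coeFn_koopman hmp φ u).symm.trans (by rw [hu φ])

theorem coeFn_finsetAverage_koopman {f : X → ℝ} (hf : MemLp f 2 μ) (s : Finset G) :
    finsetAverage (koopman hmp) s (hf.toLp f) =ᵐ[μ] orbitAverage T s f := by
  have hterm : ∀ᵐ x ∂μ, ∀ φ ∈ s, koopman hmp φ (hf.toLp f) x = f (T φ x) :=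
    (ae_ball_iff s.finite_toSet.countable).2 fun φ _ =>
      (coeFn_koopman hmp φ _).trans ((hmp φ).quasiMeasurePreserving.ae_eq_comp hf.coeFn_toLp)
  rw [finsetAverage_apply]
  filter_upwards [Lp.coeFn_smul (s.card : ℝ)⁻¹ (∑ φ ∈ s, koopman hmp φ (hf.toLp f)),
    Lp.coeFn_fun_finsetSum s fun φ => koopman hmp φ (hf.toLp f), hterm] with x hsmul hsum hx
  rw [hsmul, Pi.smul_apply, hsum, Finset.sum_congr rfl hx, orbitAverage, smul_eq_mul,
    inv_mul_eq_div]

end Koopman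

theorem tendsto_integral_abs_orbitAverage_sub_condExp_of_memLp {G X : Type*} [Group G]
    [Countable G] [DecidableEq G] [MeasurableSpace X] {μ : Measure X} [IsProbabilityMeasure μ]
    {T : G → X → X} (hTid : ∀ x, T 1 x = x) (hTcomp : ∀ φ ψ x, T (φ * ψ) x = T φ (T ψ x))
    (hmp : ∀ φ, MeasurePreserving (T φ) μ μ) {A : ℕ → Finset G} (hA : ∀ k, (A k).Nonempty)
    (hFolner : IsFolnerSeq A) {f : X → ℝ} (hf : MemLp f 2 μ) :
    Tendsto (fun k => ∫ x, |orbitAverage T (A k) f x - μ[f | invSigma T] x| ∂μ) atTop (𝓝 0) := by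
  have : Fact (invSigma T ≤ ‹MeasurableSpace X›) := ⟨invSigma_le⟩
  set K := lpMeas ℝ ℝ (invSigma T) 2 μ
  have hL2 := tendsto_finsetAverage_starProjection (norm_koopman_le hmp)
    (koopman_koopman hmp hTcomp) K (mem_lpMeas_invSigma_iff hmp hTid hTcomp) hA hFolner
    (hf.toLp f)
  -- `condExpL2` is by definition the orthogonal projection onto `K`
  have hP : K.starProjection (hf.toLp f) =ᵐ[μ] μ[f | invSigma T] :=
    hf.condExpL2_ae_eq_condExp (𝕜 := ℝ) invSigma_le
  refine squeeze_zero (fun k => integral_nonneg fun _ => abs_nonneg _) (fun k => ?_)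
    (tendsto_iff_norm_sub_tendsto_zero.1 hL2)
  calc ∫ x, |orbitAverage T (A k) f x - μ[f | invSigma T] x| ∂μ
      = ∫ x, ‖(finsetAverage (koopman hmp) (A k) (hf.toLp f) - K.starProjection (hf.toLp f)) x‖
          ∂μ := by
        refine integral_congr_ae ?_
        filter_upwards [coeFn_finsetAverage_koopman hmp hf (A k), hP, Lp.coeFn_sub
          (finsetAverage (koopman hmp) (A k) (hf.toLp f)) (K.starProjection (hf.toLp f))]
          with x hx hPx hsub
        rw [hsub, Pi.sub_apply, hx, hPx, Real.norm_eq_abs]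
    _ ≤ _ := integral_norm_le_norm_Lp_two _

theorem tendsto_integral_abs_orbitAverage_sub_condExp {G X : Type*} [Group G]
    [Countable G] [DecidableEq G] [MeasurableSpace X] {μ : Measure X} [IsProbabilityMeasure μ]
    {T : G → X → X} (hTid : ∀ x, T 1 x = x) (hTcomp : ∀ φ ψ x, T (φ * ψ) x = T φ (T ψ x))
    (hmp : ∀ φ, MeasurePreserving (T φ) μ μ) {A : ℕ → Finset G} (hA : ∀ k, (A k).Nonempty)
    (hFolner : IsFolnerSeq A) {f : X → ℝ} (hf : Integrable f μ) :
    Tendsto (fun k => ∫ x, |orbitAverage T (A k) f x - μ[f | invSigma T] x| ∂μ) atTop (𝓝 0) := by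
  refine Metric.tendsto_atTop.2 fun ε hε => ?_
  obtain ⟨g, hg, hfg⟩ := exists_memLp_two_integral_abs_sub_lt hf (by positivity : 0 < ε / 4)
  obtain ⟨N, hN⟩ := Metric.tendsto_atTop.1
    (tendsto_integral_abs_orbitAverage_sub_condExp_of_memLp hTid hTcomp hmp hA hFolner hg)
    (ε / 2) (by positivity)
  refine ⟨N, fun k hk => ?_⟩
  have hbound := integral_abs_orbitAverage_sub_condExp_le (m := invSigma T) hmp (hA k) hf
    (hg.integrable one_le_two)
  have hgk := hN k hk
  rw [Real.dist_0_eq_abs, abs_of_nonneg (integral_nonneg fun _ => abs_nonneg _)] at hgk ⊢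
  linarith

theorem symmetric_lln_L1_general
    {Xs : Type*} [MeasurableSpace Xs]
    (μ : Measure Xs) [IsProbabilityMeasure μ]
    {G : Type*} [Group G] [Countable G] [DecidableEq G]
    (T : G → Xs → Xs)
    (hTmeas : ∀ φ, Measurable (T φ))
    (hTid : ∀ x, T 1 x = x)
    (hTcomp : ∀ φ ψ x, T (φ * ψ) x = T φ (T ψ x))
    (hTinv : ∀ φ, Measure.map (T φ) μ = μ)
    (A : ℕ → Finset G) (hA : ∀ k, (A k).Nonempty)
    (hFolner : ∀ φ : G,
      Tendsto (fun k => ((((A k).image fun g => φ * g) ∩ A k).card : ℝ) / ((A k).card : ℝ))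
        atTop (𝓝 1))
    (f : Xs → ℝ) (fk : ℕ → Xs → ℝ)
    (hfint : Integrable f μ) (hfkint : ∀ k, Integrable (fk k) μ)
    (hconv : ∀ᵐ x ∂μ, Tendsto (fun k => fk k x) atTop (𝓝 (f x)))
    (g : Xs → ℝ) (hg : Integrable g μ)
    (hdom : ∀ k, ∀ᵐ x ∂μ, |fk k x| ≤ g x) :
    Tendsto
      (fun k => ∫ x, |(∑ φ ∈ A k, fk k (T φ x)) / ((A k).card : ℝ) - (μ[f | invSigma T]) x| ∂μ)
      atTop (𝓝 0) := by
  have hmp : ∀ φ, MeasurePreserving (T φ) μ μ := fun φ => ⟨hTmeas φ, hTinv φ⟩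
  have hergodic := tendsto_integral_abs_orbitAverage_sub_condExp hTid hTcomp hmp hA hFolner hfint
  have hdiff := tendsto_integral_abs_sub_of_dominated_convergence
    (fun k => (hfkint k).aestronglyMeasurable) hfint hg hdom hconv
  have hbound : ∀ k, ∫ x, |orbitAverage T (A k) (fk k) x - μ[f | invSigma T] x| ∂μ ≤
      ∫ x, |fk k x - f x| ∂μ + ∫ x, |orbitAverage T (A k) f x - μ[f | invSigma T] x| ∂μ :=
    fun k => (integral_abs_sub_le_add (integrable_orbitAverage hmp _ (hfkint k))
      (integrable_orbitAverage hmp _ hfint) integrable_condExp).trans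
        (add_le_add (integral_abs_orbitAverage_sub_le hmp (hA k) (hfkint k) hfint) le_rfl)
  change Tendsto (fun k => ∫ x, |orbitAverage T (A k) (fk k) x - μ[f | invSigma T] x| ∂μ) _ _
  refine squeeze_zero (fun k => integral_nonneg fun _ => abs_nonneg _) hbound ?_
  simpa using hdiff.add hergodic

/-- **Symmetric law of large numbers, L¹ version** (Theorem `lemma:main`, mean convergence).
Under the hypotheses of the a.s. version, if moreover `|f_k| ≤ g` a.e. for some `g ∈ L¹(μ)`,
the empirical averages converge to the conditional expectation of `f` given the invariant
σ-algebra in `L¹(μ)`. -/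
theorem symmetric_lln_L1
    {Xs : Type*} [TopologicalSpace Xs] [PolishSpace Xs] [MeasurableSpace Xs] [BorelSpace Xs]
    (μ : Measure Xs) [IsProbabilityMeasure μ]
    {G : Type*} [Group G] [Countable G] [DecidableEq G]
    (T : G → Xs → Xs)
    (hTmeas : ∀ φ, Measurable (T φ))
    (hTid : ∀ x, T 1 x = x)
    (hTcomp : ∀ φ ψ x, T (φ * ψ) x = T φ (T ψ x))
    (hTinv : ∀ φ, Measure.map (T φ) μ = μ)
    (A : ℕ → Finset G) (hA : ∀ k, (A k).Nonempty)
    (hFolner : ∀ φ : G,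
      Tendsto (fun k => ((((A k).image fun g => φ * g) ∩ A k).card : ℝ) / ((A k).card : ℝ))
        atTop (𝓝 1))
    (hTempered : ∃ c : ℝ, 0 < c ∧ ∀ k,
      (((((Finset.range k).biUnion fun j => (A j)⁻¹)) * A k).card : ℝ) ≤ c * ((A k).card : ℝ))
    (f : Xs → ℝ) (fk : ℕ → Xs → ℝ)
    (hfmeas : Measurable f) (hfkmeas : ∀ k, Measurable (fk k))
    (hfint : Integrable f μ) (hfkint : ∀ k, Integrable (fk k) μ)
    (hconv : ∀ᵐ x ∂μ, Tendsto (fun k => fk k x) atTop (𝓝 (f x)))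
    (g : Xs → ℝ) (hg : Integrable g μ)
    (hdom : ∀ k, ∀ᵐ x ∂μ, |fk k x| ≤ g x) :
    Tendsto
      (fun k => ∫ x, |(∑ φ ∈ A k, fk k (T φ x)) / ((A k).card : ℝ) - (μ[f | invSigma T]) x| ∂μ)
      atTop (𝓝 0) :=
  symmetric_lln_L1_general μ T hTmeas hTid hTcomp hTinv A hA hFolner f fk hfint hfkint hconv g hg
    hdom
end

section
/- Let y ∈ X have prefix densities. Then for every m ∈ ℕ, every ψ ∈ G_m and every a ∈ X_m, t_{T_m(ψ,a)}(y) = t_a(y). (Equivalently: the limiting output distribution of the sampler that reports (T_{Φ_n} y)|_k with Φ_n uniformly distributed on G_n is invariant under the action of G, cylinder set by cylinder set.) -/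
open MeasureTheory Filter Topology

/-- The space of coherent sequences (inverse limit) of the system `r n : X (n+1) → X n`. -/
abbrev Coherent (X : ℕ → Type*) (r : ∀ n, X (n + 1) → X n) : Type _ :=
  {x : ∀ n, X n // ∀ n, r n (x (n + 1)) = x n}

/-- The empirical frequency `|{φ ∈ Gn n : (T φ y)|ₖ = a}| / |Gn n|` of the prefix `a`
among the transforms of `y` by the finite subgroup `Gn n`; the prefix density `t_a(y)`
is its limit as `n → ∞`, whenever it exists. -/
noncomputable def freq {G : Type*} [Group G] {L Xk : Type*}
    (Gn : ℕ → Subgroup G) (T : G → L → L) (pr : L → Xk) (y : L) (a : Xk) (n : ℕ) : ℝ :=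
  (Nat.card {φ : G // φ ∈ Gn n ∧ pr (T φ y) = a} : ℝ) / (Nat.card ↥(Gn n) : ℝ)

/-- **Invariance of the output distribution** (Theorem `result:direct:union:sampler`):
if `y` has prefix densities `t`, then the limiting output law of the sampler is invariant
under the action of `G`, cylinder set by cylinder set: `t_{Tₘ(ψ,a)}(y) = t_a(y)` for every
`ψ ∈ Gₘ` and `a ∈ Xₘ`. -/
theorem prefix_densities_output_invariant
    (X : ℕ → Type*) [∀ n, Countable (X n)] [∀ n, Nonempty (X n)]
    (r : ∀ n, X (n + 1) → X n) (hr : ∀ n, Function.Surjective (r n))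
    (G : Type*) [Group G]
    (Gn : ℕ → Subgroup G) (hGmono : Monotone Gn)
    (hGfin : ∀ n, (Gn n : Set G).Finite)
    (hGunion : ∀ g : G, ∃ n, g ∈ Gn n)
    (T : G → Coherent X r → Coherent X r)
    (hTid : ∀ x, T 1 x = x)
    (hTcomp : ∀ φ ψ x, T (φ * ψ) x = T φ (T ψ x))
    (Tn : ∀ n, G → X n → X n)
    (hTnid : ∀ n (a : X n), Tn n 1 a = a)
    (hTncomp : ∀ n (φ ψ : G), φ ∈ Gn n → ψ ∈ Gn n → ∀ a : X n,
      Tn n (φ * ψ) a = Tn n φ (Tn n ψ a))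
    (hprefix : ∀ n (φ : G), φ ∈ Gn n → ∀ x : Coherent X r, (T φ x).1 n = Tn n φ (x.1 n))
    (y : Coherent X r)
    (t : (k : ℕ) → X k → ℝ)
    (hy : ∀ (k : ℕ) (a : X k),
      Tendsto (freq Gn T (fun x => x.1 k) y a) atTop (𝓝 (t k a))) :
    ∀ (m : ℕ) (ψ : G), ψ ∈ Gn m → ∀ a : X m, t m (Tn m ψ a) = t m a := by
  intro m ψ hψ a
  have key : ∀ n, m ≤ n → freq Gn T (fun x => x.1 m) y (Tn m ψ a) n
      = freq Gn T (fun x => x.1 m) y a n := by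
    intro n hn
    unfold freq
    congr 2
    refine Nat.card_congr ?_
    have hψn : ψ ∈ Gn n := hGmono hn hψ
    have hstep : ∀ (χ : G), χ ∈ Gn m → ∀ (φ : G), (T (χ * φ) y).1 m = Tn m χ ((T φ y).1 m) := by
      intro χ hχ φ
      rw [hTcomp, hprefix m χ hχ]
    refine
      { toFun := fun φ => ⟨ψ⁻¹ * φ.1, ⟨mul_mem (inv_mem hψn) φ.2.1, ?_⟩⟩
        invFun := fun φ => ⟨ψ * φ.1, ⟨mul_mem hψn φ.2.1, ?_⟩⟩
        left_inv := ?_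
        right_inv := ?_ }
    · show (T (ψ⁻¹ * φ.1) y).1 m = a
      have hφ : (T φ.1 y).1 m = Tn m ψ a := φ.2.2
      rw [hstep ψ⁻¹ (inv_mem hψ), hφ, ← hTncomp m ψ⁻¹ ψ (inv_mem hψ) hψ,
        inv_mul_cancel, hTnid]
    · show (T (ψ * φ.1) y).1 m = Tn m ψ a
      have hφ : (T φ.1 y).1 m = a := φ.2.2
      rw [hstep ψ hψ, hφ]
    · intro φ; ext; simp
    · intro φ; ext; simp
  have h1 := hy m (Tn m ψ a)
  have h2 : Tendsto (freq Gn T (fun x => x.1 m) y (Tn m ψ a)) atTop (𝓝 (t m a)) :=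
    (hy m a).congr' (by filter_upwards [eventually_ge_atTop m] with n hn using (key n hn).symm)
  exact tendsto_nhds_unique h1 h2
end

section
/- Suppose every y ∈ X has prefix densities, let D := ⨆_k X_k be the (countable) disjoint union, and let 𝐭 : X → [0,1]^D be the map y ↦ (t_a(y))_{a∈D}, with [0,1]^D carrying the product topology and its Borel σ-algebra. If 𝐭(A) is a Borel subset of [0,1]^D for every open set A ⊆ X, then there exists a Borel measurable map σ : [0,1]^D → X such that for every y ∈ X the point σ(𝐭(y)) satisfies t_a(σ(𝐭(y))) = t_a(y) for every a ∈ D, i.e. σ ∘ 𝐭 maps each point to a point with the same prefix densities. -/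
open MeasureTheory Filter Topology

namespace PrefixSel

variable {X : ℕ → Type*}

/-- Downward projection along the chain `r`. -/
def down (r : ∀ n, X (n + 1) → X n) {k n : ℕ} (h : k ≤ n) : X n → X k :=
  Nat.leRecOn h (fun {m} f x => f (r m x)) id

variable {r : ∀ n, X (n + 1) → X n}

lemma down_refl {n : ℕ} (h : n ≤ n) (x : X n) : down r h x = x :=
  congrFun (Nat.leRecOn_self (C := fun m => X m → X n) id) x

lemma down_succ {k n : ℕ} (h1 : k ≤ n) (h2 : k ≤ n + 1) (x : X (n + 1)) :
    down r h2 x = down r h1 (r n x) :=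
  congrFun (Nat.leRecOn_succ (C := fun m => X m → X k) h1 (id : X k → X k)) x

lemma down_coh (x : Coherent X r) {k n : ℕ} (h : k ≤ n) : down r h (x.1 n) = x.1 k := by
  induction n, h using Nat.le_induction with
  | base => exact down_refl _ _
  | succ n h ih => rw [down_succ h, x.2 n, ih]

lemma down_comp {j k n : ℕ} (h1 : j ≤ k) (h2 : k ≤ n) (h3 : j ≤ n) (x : X n) :
    down r h1 (down r h2 x) = down r h3 x := by
  induction n, h2 using Nat.le_induction with
  | base => rw [down_refl]
  | succ n h2 ih => rw [down_succ h2, down_succ (h1.trans h2), ih]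

lemma down_step {k n : ℕ} (h : k + 1 ≤ n) (h2 : k ≤ n) (x : X n) :
    r k (down r h x) = down r h2 x := by
  have e1 : down r (Nat.le_succ k) (down r h x) = down r h2 x := down_comp _ _ _ _
  rw [down_succ (le_refl k), down_refl] at e1
  exact e1

variable (r) in
/-- A sequence through `a : X n`, extended upward by choice and downward by `r`. -/
noncomputable def extFun (hr : ∀ n, Function.Surjective (r n)) (n : ℕ) (a : X n) : ∀ m, X m
  | 0 => down r (Nat.zero_le n) a
  | m + 1 =>
    if h : m + 1 ≤ n then down r h a else Function.surjInv (hr m) (extFun hr n a m)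

variable (hr : ∀ n, Function.Surjective (r n))

lemma extFun_le {n : ℕ} {a : X n} {m : ℕ} (h : m ≤ n) : extFun r hr n a m = down r h a := by
  cases m with
  | zero => rfl
  | succ m => rw [extFun, dif_pos h]

noncomputable def extSeq (n : ℕ) (a : X n) : Coherent X r :=
  ⟨extFun r hr n a, by
    intro m
    by_cases h : m + 1 ≤ n
    · rw [extFun_le hr h, down_step (r := r) h (Nat.le_of_succ_le h), extFun_le hr]
    · rw [show extFun r hr n a (m + 1) = Function.surjInv (hr m) (extFun r hr n a m) by
        rw [extFun, dif_neg h]]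
      exact Function.surjInv_eq (hr m) _⟩

lemma extSeq_self (n : ℕ) (a : X n) : (extSeq hr n a).1 n = a := by
  show extFun r hr n a n = a
  rw [extFun_le hr (le_refl n), down_refl]


variable {G : Type*} [Group G] (Gn : ℕ → Subgroup G) (T : G → Coherent X r → Coherent X r)
lemma freq_congr {Tn : ∀ n, G → X n → X n}
    (hprefix : ∀ n (φ : G), φ ∈ Gn n → ∀ x : Coherent X r, (T φ x).1 n = Tn n φ (x.1 n)) {k n : ℕ} (hk : k ≤ n) (b : X k) {y y' : Coherent X r}
    (hyy : y.1 n = y'.1 n) :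
    freq Gn T (fun x => x.1 k) y b n = freq Gn T (fun x => x.1 k) y' b n := by
  have hcard : Nat.card {φ : G // φ ∈ Gn n ∧ (T φ y).1 k = b}
      = Nat.card {φ : G // φ ∈ Gn n ∧ (T φ y').1 k = b} := by
    refine Nat.card_congr (Equiv.subtypeEquivRight fun φ => and_congr_right fun hφ => ?_)
    have key : (T φ y).1 k = (T φ y').1 k := by
      rw [← down_coh (T φ y) hk, ← down_coh (T φ y') hk, hprefix n φ hφ y,
        hprefix n φ hφ y', hyy]
    rw [key]
  unfold freq
  rw [hcard]


variable [∀ n, Nonempty (X n)]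

/-- Proof-free downward projection of a "leveled point". -/
noncomputable def downTo (r : ∀ n, X (n + 1) → X n) (k : ℕ) (c : Σ m, X m) : X k :=
  if h : k ≤ c.1 then down r h c.2 else Classical.arbitrary _

lemma downTo_eq {k : ℕ} {c : Σ m, X m} (h : k ≤ c.1) : downTo r k c = down r h c.2 :=
  dif_pos h

variable (t : Coherent X r → (Σ k, X k) → unitInterval) (e : ℕ → Σ k, X k)

def Pz (z : (Σ k, X k) → unitInterval) (c : Σ m, X m) : Prop :=
  ∃ y : Coherent X r, y.1 c.1 = c.2 ∧ t y = z

noncomputable def Fv (c : Σ m, X m) (b : Σ k, X k) : ℝ :=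
  freq Gn T (fun x => x.1 b.1) (extSeq hr c.1 c.2) b.2 c.1

def Good (prev : Σ m, X m) (j : ℕ) (c : Σ m, X m)
    (z : (Σ k, X k) → unitInterval) : Prop :=
  prev.1 < c.1 ∧ downTo r prev.1 c = prev.2 ∧ Pz t z c ∧
    ∀ i ≤ j, (e i).1 ≤ c.1 → |Fv hr Gn T c (e i) - (z (e i) : ℝ)| < 1 / (j + 1)

open Classical in
noncomputable def stepF (prev : Σ m, X m) (j : ℕ)
    (z : (Σ k, X k) → unitInterval) : Σ m, X m :=
  if h : ∃ nn : ℕ, Good hr Gn T t e prev j (e nn) z then e (Nat.find h)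
  else ⟨prev.1 + 1, (extSeq hr prev.1 prev.2).1 (prev.1 + 1)⟩

def Q0 (nn : ℕ) : Set ((Σ k, X k) → unitInterval) :=
  {z | (e nn).1 = 0 ∧ Pz t z (e nn)}

open Classical in
noncomputable def sseq (z : (Σ k, X k) → unitInterval) : ℕ → Σ m, X m
  | 0 => if h : ∃ nn : ℕ, z ∈ Q0 t e nn then e (Nat.find h)
         else ⟨0, Classical.arbitrary (X 0)⟩
  | j + 1 => stepF hr Gn T t e (sseq z j) j z

lemma stepF_spec (prev : Σ m, X m) (j : ℕ) (z : (Σ k, X k) → unitInterval) :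
    prev.1 < (stepF hr Gn T t e prev j z).1 ∧
      downTo r prev.1 (stepF hr Gn T t e prev j z) = prev.2 := by
  classical
  unfold stepF
  split
  · next hex => exact ⟨(Nat.find_spec hex).1, (Nat.find_spec hex).2.1⟩
  · refine ⟨Nat.lt_succ_self _, ?_⟩
    rw [downTo_eq (Nat.le_succ prev.1)]
    show down r _ ((extSeq hr prev.1 prev.2).1 (prev.1 + 1)) = prev.2
    rw [down_succ (le_refl prev.1), down_refl, (extSeq hr prev.1 prev.2).2 prev.1,
      extSeq_self]

lemma sseq_lt (z : (Σ k, X k) → unitInterval) (j : ℕ) :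
    (sseq hr Gn T t e z j).1 < (sseq hr Gn T t e z (j + 1)).1 :=
  (stepF_spec hr Gn T t e _ j z).1

lemma sseq_mono (z : (Σ k, X k) → unitInterval) :
    Monotone fun j => (sseq hr Gn T t e z j).1 :=
  monotone_nat_of_le_succ fun j => (sseq_lt hr Gn T t e z j).le

lemma sseq_le_self (z : (Σ k, X k) → unitInterval) (j : ℕ) :
    j ≤ (sseq hr Gn T t e z j).1 := by
  induction j with
  | zero => exact Nat.zero_le _
  | succ j ih => exact Nat.succ_le_of_lt (lt_of_le_of_lt ih (sseq_lt hr Gn T t e z j))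

lemma sseq_chain (z : (Σ k, X k) → unitInterval) {i j : ℕ} (hij : i ≤ j) :
    downTo r (sseq hr Gn T t e z i).1 (sseq hr Gn T t e z j) =
      (sseq hr Gn T t e z i).2 := by
  induction j, hij using Nat.le_induction with
  | base => rw [downTo_eq (le_refl _), down_refl]
  | succ j hij ih =>
    have h1 : (sseq hr Gn T t e z i).1 ≤ (sseq hr Gn T t e z j).1 :=
      sseq_mono hr Gn T t e z hij
    have h2 : (sseq hr Gn T t e z j).1 ≤ (sseq hr Gn T t e z (j + 1)).1 :=
      (sseq_lt hr Gn T t e z j).le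
    rw [downTo_eq (h1.trans h2), ← down_comp (r := r) h1 h2 (h1.trans h2),
      ← downTo_eq (r := r) h2, show downTo r (sseq hr Gn T t e z j).1
        (sseq hr Gn T t e z (j + 1)) = (sseq hr Gn T t e z j).2 from
        (stepF_spec hr Gn T t e _ j z).2, ← downTo_eq (r := r) h1, ih]

noncomputable def sigmaF (z : (Σ k, X k) → unitInterval) : Coherent X r :=
  ⟨fun k => downTo r k (sseq hr Gn T t e z k), by
    intro m
    have h1 : m ≤ (sseq hr Gn T t e z m).1 := sseq_le_self hr Gn T t e z m
    have h2 : (sseq hr Gn T t e z m).1 ≤ (sseq hr Gn T t e z (m + 1)).1 :=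
      (sseq_lt hr Gn T t e z m).le
    have h3 : m + 1 ≤ (sseq hr Gn T t e z (m + 1)).1 := sseq_le_self hr Gn T t e z (m + 1)
    show r m (downTo r (m + 1) (sseq hr Gn T t e z (m + 1))) =
      downTo r m (sseq hr Gn T t e z m)
    rw [downTo_eq h3, down_step (r := r) h3 (h1.trans h2),
      ← down_comp (r := r) h1 h2 (h1.trans h2), ← downTo_eq (r := r) h2,
      show downTo r (sseq hr Gn T t e z m).1 (sseq hr Gn T t e z (m + 1)) =
        (sseq hr Gn T t e z m).2 from (stepF_spec hr Gn T t e _ m z).2,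
      ← downTo_eq (r := r) h1]⟩

lemma sigmaF_at (z : (Σ k, X k) → unitInterval) (j : ℕ) :
    (sigmaF hr Gn T t e z).1 (sseq hr Gn T t e z j).1 = (sseq hr Gn T t e z j).2 :=
  sseq_chain hr Gn T t e z (sseq_le_self hr Gn T t e z j)


section Correct

variable {Tn : ∀ n, G → X n → X n}

lemma exists_good
    (hprefix : ∀ n (φ : G), φ ∈ Gn n → ∀ x : Coherent X r, (T φ x).1 n = Tn n φ (x.1 n))
    (ht : ∀ (y : Coherent X r) (k : ℕ) (a : X k),
      Tendsto (freq Gn T (fun x => x.1 k) y a) atTop (𝓝 ((t y ⟨k, a⟩ : ℝ))))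
    (he : Function.Surjective e)
    {z : (Σ k, X k) → unitInterval} (prev : Σ m, X m) (j : ℕ) (hP : Pz t z prev) :
    ∃ nn, Good hr Gn T t e prev j (e nn) z := by
  obtain ⟨y', hy1, hy2⟩ := hP
  have hε : (0:ℝ) < 1 / (j + 1) := by positivity
  have hev : ∀ᶠ N in atTop, (prev.1 < N ∧ ∀ i ∈ Set.Iic j,
      |freq Gn T (fun x => x.1 (e i).1) y' (e i).2 N - (z (e i) : ℝ)| < 1 / (j + 1)) := by
    refine (eventually_gt_atTop prev.1).and ?_
    refine (eventually_all_finite (Set.finite_Iic j)).2 fun i _ => ?_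
    have hti := ht y' (e i).1 (e i).2
    have hval : (t y' ⟨(e i).1, (e i).2⟩ : ℝ) = (z (e i) : ℝ) := by rw [hy2, Sigma.eta]
    rw [hval] at hti
    exact hti.eventually (eventually_abs_sub_lt _ hε)
  obtain ⟨N, hN1, hN2⟩ := hev.exists
  obtain ⟨nn, hnn⟩ := he ⟨N, y'.1 N⟩
  refine ⟨nn, ?_⟩
  rw [hnn]
  refine ⟨hN1, ?_, ⟨y', rfl, hy2⟩, ?_⟩
  · rw [downTo_eq hN1.le]
    show down r _ (y'.1 N) = prev.2
    rw [down_coh y', hy1]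
  · intro i hij hguard
    have hF : Fv hr Gn T ⟨N, y'.1 N⟩ (e i)
        = freq Gn T (fun x => x.1 (e i).1) y' (e i).2 N := by
      exact freq_congr Gn T hprefix hguard (e i).2 (by rw [extSeq_self])
    rw [hF]
    exact hN2 i hij

lemma sigmaF_dens
    (hprefix : ∀ n (φ : G), φ ∈ Gn n → ∀ x : Coherent X r, (T φ x).1 n = Tn n φ (x.1 n))
    (ht : ∀ (y : Coherent X r) (k : ℕ) (a : X k),
      Tendsto (freq Gn T (fun x => x.1 k) y a) atTop (𝓝 ((t y ⟨k, a⟩ : ℝ))))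
    (he : Function.Surjective e) (y : Coherent X r) :
    t (sigmaF hr Gn T t e (t y)) = t y := by
  classical
  set z := t y with hz
  have h0 : ∃ nn : ℕ, z ∈ Q0 t e nn := by
    obtain ⟨nn, hnn⟩ := he ⟨0, y.1 0⟩
    exact ⟨nn, show (e nn).1 = 0 ∧ Pz t z (e nn) by rw [hnn]; exact ⟨rfl, y, rfl, hz.symm⟩⟩
  have inv : ∀ j, Pz t z (sseq hr Gn T t e z j) := by
    intro j
    induction j with
    | zero =>
      show Pz t z (sseq hr Gn T t e z 0)
      unfold sseq
      rw [dif_pos h0]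
      exact (Nat.find_spec h0).2
    | succ j ih =>
      have hex := exists_good hr Gn T t e hprefix ht he _ j ih
      show Pz t z (stepF hr Gn T t e (sseq hr Gn T t e z j) j z)
      unfold stepF
      rw [dif_pos hex]
      exact (Nat.find_spec hex).2.2.1
  have good : ∀ j, Good hr Gn T t e (sseq hr Gn T t e z j) j
      (sseq hr Gn T t e z (j + 1)) z := by
    intro j
    have hex := exists_good hr Gn T t e hprefix ht he _ j (inv j)
    show Good hr Gn T t e _ j (stepF hr Gn T t e (sseq hr Gn T t e z j) j z) z
    unfold stepF
    rw [dif_pos hex]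
    exact Nat.find_spec hex
  funext d
  obtain ⟨i0, hi0⟩ := he d
  set x := sigmaF hr Gn T t e z with hxdef
  have hx : Tendsto (freq Gn T (fun v => v.1 d.1) x d.2) atTop (𝓝 ((t x d : ℝ))) :=
    ht x d.1 d.2
  have hsub : Tendsto (fun j => freq Gn T (fun v => v.1 d.1) x d.2
      ((sseq hr Gn T t e z (j + 1)).1)) atTop (𝓝 ((t x d : ℝ))) := by
    refine hx.comp (tendsto_atTop_mono
      (fun j => (Nat.le_succ j).trans (sseq_le_self hr Gn T t e z (j + 1))) tendsto_id)
  have hlim2 : Tendsto (fun j => freq Gn T (fun v => v.1 d.1) x d.2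
      ((sseq hr Gn T t e z (j + 1)).1)) atTop (𝓝 ((z d : ℝ))) := by
    have hev : ∀ᶠ j : ℕ in atTop,
        ‖freq Gn T (fun v => v.1 d.1) x d.2 ((sseq hr Gn T t e z (j + 1)).1)
          - (z d : ℝ)‖ ≤ 1 / (j + 1) := by
      filter_upwards [eventually_ge_atTop i0, eventually_ge_atTop d.1] with j hji hjd
      have hguard : (e i0).1 ≤ (sseq hr Gn T t e z (j + 1)).1 := by
        rw [hi0]
        exact hjd.trans ((Nat.le_succ j).trans (sseq_le_self hr Gn T t e z (j + 1)))
      have hg := (good j).2.2.2 i0 hji hguard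
      rw [hi0] at hg hguard
      have hFx : Fv hr Gn T (sseq hr Gn T t e z (j + 1)) d
          = freq Gn T (fun v => v.1 d.1) x d.2 ((sseq hr Gn T t e z (j + 1)).1) := by
        refine freq_congr Gn T hprefix hguard d.2 ?_
        rw [extSeq_self, sigmaF_at]
      rw [hFx] at hg
      rw [Real.norm_eq_abs]
      exact hg.le
    have hzero : Tendsto (fun j : ℕ => freq Gn T (fun v => v.1 d.1) x d.2
        ((sseq hr Gn T t e z (j + 1)).1) - (z d : ℝ)) atTop (𝓝 0) :=
      squeeze_zero_norm' hev tendsto_one_div_add_atTop_nhds_zero_nat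
    have := hzero.add_const ((z d : ℝ))
    simpa using this
  exact Subtype.ext (tendsto_nhds_unique hsub hlim2)

end Correct

section Meas

variable [∀ n, MeasurableSpace (X n)] [∀ n, DiscreteMeasurableSpace (X n)]
  [∀ n, Countable (X n)]

lemma allMeasSigma (S : Set (Σ m, X m)) : MeasurableSet S := by
  refine MeasurableSpace.measurableSet_iInf.2 fun a => ?_
  show MeasurableSet (Sigma.mk a ⁻¹' S)
  exact MeasurableSet.of_discrete

lemma measDownTo (k : ℕ) : Measurable (downTo r k : (Σ m, X m) → X k) :=
  fun _ _ => allMeasSigma _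

open Classical in
lemma meas_findPick {Q : ℕ → Set ((Σ k, X k) → unitInterval)}
    (hQ : ∀ n, MeasurableSet (Q n)) (v : ℕ → Σ m, X m) (d₀ : Σ m, X m) :
    Measurable (fun z => if h : ∃ n, z ∈ Q n then v (Nat.find h) else d₀) := by
  classical
  have hP : ∀ z : (Σ k, X k) → unitInterval, ∃ n, z ∈ Q n ∨ ∀ m, z ∉ Q m := by
    intro z
    by_cases h : ∃ n, z ∈ Q n
    · obtain ⟨n, hn⟩ := h; exact ⟨n, Or.inl hn⟩
    · push_neg at h; exact ⟨0, Or.inr h⟩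
  have hf : Measurable fun z => v (Nat.find (hP z)) := by
    refine Measurable.find (f := fun n _ => v n) (fun n => measurable_const)
      (fun n => ?_) hP
    have : {z | z ∈ Q n ∨ ∀ m, z ∉ Q m} = Q n ∪ ⋂ m, (Q m)ᶜ := by
      ext z; simp [Set.mem_iInter]
    rw [this]
    exact (hQ n).union (MeasurableSet.iInter fun m => (hQ m).compl)
  have heq : (fun z => if h : ∃ n, z ∈ Q n then v (Nat.find h) else d₀)
      = Set.piecewise {z | ∃ n, z ∈ Q n} (fun z => v (Nat.find (hP z)))
        (fun _ => d₀) := by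
    funext z
    by_cases h : ∃ n, z ∈ Q n
    · rw [dif_pos h, Set.piecewise_eq_of_mem _ _ _ (show z ∈ {z | ∃ n, z ∈ Q n} from h)]
      congr 1
      refine Nat.le_antisymm (Nat.find_le ?_) (Nat.find_le (Or.inl (Nat.find_spec h)))
      rcases Nat.find_spec (hP z) with hq | hq
      · exact hq
      · exact absurd h (by push_neg; exact hq)
    · rw [dif_neg h,
        Set.piecewise_eq_of_notMem _ _ _ (show z ∉ {z | ∃ n, z ∈ Q n} from h)]
  rw [heq]
  refine Measurable.piecewise ?_ hf measurable_const
  have : {z | ∃ n, z ∈ Q n} = ⋃ n, Q n := by ext z; simp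
  rw [this]
  exact MeasurableSet.iUnion hQ

lemma meas_comp {f : ((Σ k, X k) → unitInterval) → Σ m, X m} (hf : Measurable f)
    {g : (Σ m, X m) → ((Σ k, X k) → unitInterval) → Σ m, X m}
    (hg : ∀ c, Measurable (g c)) : Measurable fun z => g (f z) z := by
  refine measurable_to_countable' fun d => ?_
  have : (fun z => g (f z) z) ⁻¹' {d} = ⋃ c, (f ⁻¹' {c} ∩ g c ⁻¹' {d}) := by
    ext w
    simp only [Set.mem_preimage, Set.mem_singleton_iff, Set.mem_iUnion, Set.mem_inter_iff]
    constructor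
    · intro h; exact ⟨f w, rfl, h⟩
    · rintro ⟨c, hc, h⟩; subst hc; exact h
  rw [this]
  exact MeasurableSet.iUnion fun c => (hf (allMeasSigma _)).inter (hg c (allMeasSigma _))

variable [∀ n, TopologicalSpace (X n)] [∀ n, DiscreteTopology (X n)]

lemma measPzSet (himg : ∀ A : Set (Coherent X r), IsOpen A →
      MeasurableSet ((fun y => t y) '' A)) (c : Σ m, X m) :
    MeasurableSet {z | Pz t z c} := by
  have heq : {z | Pz t z c} = (fun y => t y) '' {x : Coherent X r | x.1 c.1 = c.2} := by
    ext z
    simp only [Set.mem_image, Set.mem_setOf_eq, Pz]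
  rw [heq]
  refine himg _ ?_
  have : {x : Coherent X r | x.1 c.1 = c.2}
      = (fun x : Coherent X r => x.1 c.1) ⁻¹' {c.2} := rfl
  rw [this]
  exact (isOpen_discrete _).preimage ((continuous_apply c.1).comp continuous_subtype_val)

lemma measC4Set (c : Σ m, X m) (j : ℕ) :
    MeasurableSet {z : (Σ k, X k) → unitInterval |
      ∀ i ≤ j, (e i).1 ≤ c.1 → |Fv hr Gn T c (e i) - (z (e i) : ℝ)| < 1 / (j + 1)} := by
  have heq : {z : (Σ k, X k) → unitInterval |
      ∀ i ≤ j, (e i).1 ≤ c.1 → |Fv hr Gn T c (e i) - (z (e i) : ℝ)| < 1 / (j + 1)}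
      = ⋂ i, ⋂ (_ : i ≤ j), ⋂ (_ : (e i).1 ≤ c.1),
        {z : (Σ k, X k) → unitInterval |
          |Fv hr Gn T c (e i) - (z (e i) : ℝ)| < 1 / (j + 1)} := by
    ext z; simp [Set.mem_iInter]
  rw [heq]
  refine MeasurableSet.iInter fun i => MeasurableSet.iInter fun _ =>
    MeasurableSet.iInter fun _ => ?_
  have : {z : (Σ k, X k) → unitInterval |
        |Fv hr Gn T c (e i) - (z (e i) : ℝ)| < 1 / (j + 1)}
      = (fun z : (Σ k, X k) → unitInterval => (z (e i) : ℝ)) ⁻¹'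
        {u : ℝ | |Fv hr Gn T c (e i) - u| < 1 / (j + 1)} := rfl
  rw [this]
  refine (measurable_subtype_coe.comp (measurable_pi_apply (e i))) ?_
  exact (isOpen_lt ((continuous_const.sub continuous_id).abs) continuous_const).measurableSet

lemma measGoodSet (himg : ∀ A : Set (Coherent X r), IsOpen A →
      MeasurableSet ((fun y => t y) '' A)) (prev : Σ m, X m) (j : ℕ) (c : Σ m, X m) :
    MeasurableSet {z | Good hr Gn T t e prev j c z} := by
  by_cases hAB : prev.1 < c.1 ∧ downTo r prev.1 c = prev.2
  · have heq : {z | Good hr Gn T t e prev j c z}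
        = {z | Pz t z c} ∩ {z : (Σ k, X k) → unitInterval |
            ∀ i ≤ j, (e i).1 ≤ c.1 → |Fv hr Gn T c (e i) - (z (e i) : ℝ)| < 1 / (j + 1)} := by
      ext z
      constructor
      · rintro ⟨_, _, h3, h4⟩; exact ⟨h3, h4⟩
      · rintro ⟨h3, h4⟩; exact ⟨hAB.1, hAB.2, h3, h4⟩
    rw [heq]
    exact (measPzSet (t := t) himg c).inter
      (measC4Set (hr := hr) (Gn := Gn) (T := T) (e := e) c j)
  · have heq : {z | Good hr Gn T t e prev j c z} = ∅ :=
      Set.eq_empty_iff_forall_notMem.2 fun z hzz => hAB ⟨hzz.1, hzz.2.1⟩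
    rw [heq]
    exact MeasurableSet.empty

lemma meas_stepF (himg : ∀ A : Set (Coherent X r), IsOpen A →
      MeasurableSet ((fun y => t y) '' A)) (prev : Σ m, X m) (j : ℕ) :
    Measurable fun z => stepF hr Gn T t e prev j z :=
  meas_findPick (Q := fun nn => {z | Good hr Gn T t e prev j (e nn) z})
    (fun nn => measGoodSet hr Gn T t e himg prev j (e nn)) e
    ⟨prev.1 + 1, (extSeq hr prev.1 prev.2).1 (prev.1 + 1)⟩

lemma meas_sseq (himg : ∀ A : Set (Coherent X r), IsOpen A →
      MeasurableSet ((fun y => t y) '' A)) (k : ℕ) :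
    Measurable fun z => sseq hr Gn T t e z k := by
  induction k with
  | zero =>
    simp only [sseq]
    refine meas_findPick (Q := Q0 t e) (fun nn => ?_) e ⟨0, Classical.arbitrary (X 0)⟩
    by_cases h : (e nn).1 = 0
    · have : Q0 t e nn = {z | Pz t z (e nn)} := by
        ext z; simp [Q0, h]
      rw [this]
      exact measPzSet (t := t) himg (e nn)
    · have : Q0 t e nn = ∅ := by
        ext z; simp [Q0, h]
      rw [this]
      exact MeasurableSet.empty
  | succ k ih =>
    simp only [sseq]
    exact meas_comp ih fun prev => meas_stepF hr Gn T t e himg prev k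

lemma meas_sigmaF (himg : ∀ A : Set (Coherent X r), IsOpen A →
      MeasurableSet ((fun y => t y) '' A)) :
    Measurable (sigmaF hr Gn T t e) := by
  refine Measurable.subtype_mk (measurable_pi_lambda _ fun k => ?_)
  exact (measDownTo k).comp (meas_sseq hr Gn T t e himg k)

end Meas

end PrefixSel

/-- **Left-inversion of the prefix density vector**
(Proposition `result:prefix:action:selector`): if every point has prefix densities and
the density vector `𝐭 : X → [0,1]^D` maps open sets to Borel sets, then there is a Borel
map `σ` with `σ ∘ 𝐭(y)` having the same prefix densities as `y`, for every `y`. -/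
theorem prefix_density_selector
    (X : ℕ → Type*) [∀ n, Countable (X n)] [∀ n, Nonempty (X n)]
    [∀ n, TopologicalSpace (X n)] [∀ n, DiscreteTopology (X n)]
    [∀ n, MeasurableSpace (X n)] [∀ n, DiscreteMeasurableSpace (X n)]
    (r : ∀ n, X (n + 1) → X n) (hr : ∀ n, Function.Surjective (r n))
    (G : Type*) [Group G]
    (Gn : ℕ → Subgroup G) (hGmono : Monotone Gn)
    (hGfin : ∀ n, (Gn n : Set G).Finite)
    (hGunion : ∀ g : G, ∃ n, g ∈ Gn n)
    (T : G → Coherent X r → Coherent X r)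
    (hTid : ∀ x, T 1 x = x)
    (hTcomp : ∀ φ ψ x, T (φ * ψ) x = T φ (T ψ x))
    (Tn : ∀ n, G → X n → X n)
    (hTnid : ∀ n (a : X n), Tn n 1 a = a)
    (hTncomp : ∀ n (φ ψ : G), φ ∈ Gn n → ψ ∈ Gn n → ∀ a : X n,
      Tn n (φ * ψ) a = Tn n φ (Tn n ψ a))
    (hprefix : ∀ n (φ : G), φ ∈ Gn n → ∀ x : Coherent X r, (T φ x).1 n = Tn n φ (x.1 n))
    (t : Coherent X r → (Σ k, X k) → unitInterval)
    (ht : ∀ (y : Coherent X r) (k : ℕ) (a : X k),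
      Tendsto (freq Gn T (fun x => x.1 k) y a) atTop (𝓝 ((t y ⟨k, a⟩ : ℝ))))
    (himg : ∀ A : Set (Coherent X r), IsOpen A → MeasurableSet ((fun y => t y) '' A)) :
    ∃ σ : ((Σ k, X k) → unitInterval) → Coherent X r,
      Measurable σ ∧ ∀ y : Coherent X r, t (σ (t y)) = t y := by
  classical
  have hne : Nonempty (Σ k, X k) := ⟨⟨0, Classical.arbitrary (X 0)⟩⟩
  obtain ⟨e, he⟩ := exists_surjective_nat (Σ k, X k)
  exact ⟨PrefixSel.sigmaF hr Gn T t e,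
    PrefixSel.meas_sigmaF hr Gn T t e himg,
    fun y => PrefixSel.sigmaF_dens hr Gn T t e hprefix ht he y⟩
end

section
/- Let (P_i)_{i∈ℕ} and P be Borel probability measures on X. Then P_i converges weakly to P (i.e. ∫ f dP_i → ∫ f dP for every bounded continuous f : X → ℝ) if and only if P_i{x ∈ X : x|_n = a} → P{x ∈ X : x|_n = a} for every n ∈ ℕ and every a ∈ X_n. -/
/-!
Cylinders `{x | x|ₙ = a}` are clopen, so weak convergence gives convergence of their measures.
Conversely the cylinders form a π-system (two cylinders are disjoint or nested) containing
arbitrarily small neighbourhoods of every point, and the space is second countable; for such a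
π-system, convergence of the measures of its members already implies weak convergence.
-/

open MeasureTheory Filter Topology BoundedContinuousFunction

namespace Coherent

variable {X : ℕ → Type*} {r : ∀ n, X (n + 1) → X n}

def cylinder (n : ℕ) (a : X n) : Set (Coherent X r) := {x | x.1 n = a}

lemma coord_eq_of_le {x y : Coherent X r} {m n : ℕ} (hmn : m ≤ n) (h : x.1 n = y.1 n) :
    x.1 m = y.1 m := by
  induction n, hmn using Nat.le_induction with
  | base => exact h
  | succ n _ ih => exact ih (by rw [← x.2 n, ← y.2 n, h])

lemma cylinder_subset_cylinder (x : Coherent X r) {m n : ℕ} (hmn : m ≤ n) :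
    cylinder (r := r) n (x.1 n) ⊆ cylinder m (x.1 m) :=
  fun _ hy => coord_eq_of_le hmn hy

lemma isPiSystem_cylinders :
    IsPiSystem {s : Set (Coherent X r) | ∃ n a, s = cylinder n a} := by
  rintro _ ⟨n, a, rfl⟩ _ ⟨m, b, rfl⟩ ⟨x, rfl, rfl⟩
  rcases le_total n m with hnm | hmn
  · exact ⟨m, x.1 m, Set.inter_eq_right.mpr (cylinder_subset_cylinder x hnm)⟩
  · exact ⟨n, x.1 n, Set.inter_eq_left.mpr (cylinder_subset_cylinder x hmn)⟩

variable [∀ n, TopologicalSpace (X n)]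

lemma exists_cylinder_subset_of_isOpen {G : Set (Coherent X r)} (hG : IsOpen G) {x : Coherent X r}
    (hx : x ∈ G) : ∃ n, cylinder n (x.1 n) ⊆ G := by
  obtain ⟨U, hU, rfl⟩ := isOpen_induced_iff.mp hG
  obtain ⟨I, u, hu, hIU⟩ := isOpen_pi_iff.mp hU x.1 hx
  refine ⟨I.sup id, fun y hy => hIU fun i hi => ?_⟩
  have hyx : y.1 i = x.1 i := coord_eq_of_le (Finset.le_sup (f := id) hi) hy
  exact hyx ▸ (hu i hi).2

variable [∀ n, DiscreteTopology (X n)]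

instance [∀ n, Countable (X n)] : SecondCountableTopology (Coherent X r) :=
  IsInducing.subtypeVal.secondCountableTopology

lemma isClopen_cylinder (n : ℕ) (a : X n) : IsClopen (cylinder (r := r) n a) :=
  (isClopen_discrete {a}).preimage ((continuous_apply n).comp continuous_subtype_val)

variable [∀ n, Countable (X n)] [MeasurableSpace (Coherent X r)] [BorelSpace (Coherent X r)]

theorem _root_.MeasureTheory.ProbabilityMeasure.tendsto_iff_forall_tendsto_cylinder
    {μs : ℕ → ProbabilityMeasure (Coherent X r)} {μ : ProbabilityMeasure (Coherent X r)} :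
    Tendsto μs atTop (𝓝 μ) ↔
      ∀ n (a : X n), Tendsto (fun i => μs i (cylinder n a)) atTop (𝓝 (μ (cylinder n a))) := by
  refine ⟨fun h n a => ProbabilityMeasure.tendsto_measure_of_isClopen_of_tendsto h
    (isClopen_cylinder n a), fun h => ?_⟩
  refine isPiSystem_cylinders.tendsto_probabilityMeasure_of_tendsto_of_mem ?_ ?_ ?_
  · rintro _ ⟨n, a, rfl⟩
    exact (isClopen_cylinder n a).isOpen.measurableSet
  · intro G hG x hx
    obtain ⟨n, hn⟩ := exists_cylinder_subset_of_isOpen hG hx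
    exact ⟨_, ⟨n, _, rfl⟩, (isClopen_cylinder n _).isOpen.mem_nhds rfl, hn⟩
  · rintro _ ⟨n, a, rfl⟩
    exact h n a

end Coherent

theorem weak_convergence_iff_cylinder_general
    (X : ℕ → Type*) [∀ n, Countable (X n)]
    [∀ n, TopologicalSpace (X n)] [∀ n, DiscreteTopology (X n)]
    (r : ∀ n, X (n + 1) → X n)
    [MeasurableSpace (Coherent X r)] [BorelSpace (Coherent X r)]
    (P : ℕ → Measure (Coherent X r)) (Q : Measure (Coherent X r))
    [∀ i, IsProbabilityMeasure (P i)] [IsProbabilityMeasure Q] :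
    (∀ f : Coherent X r →ᵇ ℝ,
        Tendsto (fun i => ∫ x, f x ∂(P i)) atTop (𝓝 (∫ x, f x ∂Q))) ↔
      (∀ (n : ℕ) (a : X n),
        Tendsto (fun i => P i {x : Coherent X r | x.1 n = a}) atTop
          (𝓝 (Q {x : Coherent X r | x.1 n = a}))) := by
  let P' : ℕ → ProbabilityMeasure (Coherent X r) := fun i => ⟨P i, inferInstance⟩
  let Q' : ProbabilityMeasure (Coherent X r) := ⟨Q, inferInstance⟩
  have toMeasure_tendsto_iff (s : Set (Coherent X r)) :
      Tendsto (fun i => P' i s) atTop (𝓝 (Q' s)) ↔ Tendsto (fun i => P i s) atTop (𝓝 (Q s)) := by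
    simp only [← ENNReal.tendsto_coe, ProbabilityMeasure.ennreal_coeFn_eq_coeFn_toMeasure]
    rfl
  calc _ ↔ Tendsto P' atTop (𝓝 Q') := ProbabilityMeasure.tendsto_iff_forall_integral_tendsto.symm
    _ ↔ _ := ProbabilityMeasure.tendsto_iff_forall_tendsto_cylinder
    _ ↔ _ := forall_congr' fun n => forall_congr' fun a => toMeasure_tendsto_iff _

/-- **Weak convergence on almost discrete spaces is convergence of cylinder
probabilities** (Lemma `lemma:procountable`, addendum (i)): Borel probability measures
`P i` converge weakly to `P` iff `P i {x : x|ₙ = a} → P {x : x|ₙ = a}` for every `n`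
and `a ∈ X n`. -/
theorem weak_convergence_iff_cylinder
    (X : ℕ → Type*) [∀ n, Countable (X n)] [∀ n, Nonempty (X n)]
    [∀ n, TopologicalSpace (X n)] [∀ n, DiscreteTopology (X n)]
    (r : ∀ n, X (n + 1) → X n) (hr : ∀ n, Function.Surjective (r n))
    [MeasurableSpace (Coherent X r)] [BorelSpace (Coherent X r)]
    (P : ℕ → Measure (Coherent X r)) (Q : Measure (Coherent X r))
    [∀ i, IsProbabilityMeasure (P i)] [IsProbabilityMeasure Q] :
    (∀ f : Coherent X r →ᵇ ℝ,
        Tendsto (fun i => ∫ x, f x ∂(P i)) atTop (𝓝 (∫ x, f x ∂Q))) ↔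
      (∀ (n : ℕ) (a : X n),
        Tendsto (fun i => P i {x : Coherent X r | x.1 n = a}) atTop
          (𝓝 (Q {x : Coherent X r | x.1 n = a}))) :=
  weak_convergence_iff_cylinder_general X r P Q
end

section
/- Let 𝐗 be a Polish space with its Borel σ-algebra, 𝐘 a second-countable Hausdorff topological space with its Borel σ-algebra, and f : 𝐗 → 𝐘 a Borel measurable map. Then: (a) for every Borel probability measure μ on 𝐗 there exists a Borel measurable map σ : 𝐘 → 𝐗 such that f(σ(y)) = y for f_*μ-almost all y ∈ 𝐘, where f_*μ is the pushforward of μ under f; and (b) the image f(𝐗) is universally measurable in 𝐘, i.e. it belongs to the completion of the Borel σ-algebra of 𝐘 with respect to every Borel probability measure on 𝐘. -/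
/-!
The range of a Borel map `f` on a Polish space is a continuous image `h(ℕ^ℕ)` of Baire space, with
`h = f ∘ g` for a continuous surjection `g` onto `X` (continuous for a finer Polish topology making
`f` continuous). Choquet's argument approximates the outer measure of `h(ℕ^ℕ)` from inside by the
images of the compact boxes `{x ≤ σ}`, built one coordinate at a time; these images are closed, so
analytic sets are universally measurable. Picking the lexicographically least point of each fibre
of `h` gives a section whose preimages of cylinders are Boolean combinations of images of
cylinders, i.e. of analytic sets. It is therefore universally measurable, and agrees
`f_*μ`-almost everywhere with a Borel map.
-/

open MeasureTheory Set Function PiNat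
open scoped ENNReal

theorem PiNat.exists_forall_of_exists_mem_cylinder {E : ℕ → Type*} {P : ℕ → (∀ n, E n) → Prop}
    (hP : ∀ k x y, y ∈ cylinder x k → P k x → P k y) {x₀ : ∀ n, E n} (h₀ : P 0 x₀)
    (step : ∀ k x, P k x → ∃ y ∈ cylinder x k, P (k + 1) y) : ∃ x, ∀ k, P k x := by
  choose! next next_mem next_P using step
  let seq : ℕ → ∀ n, E n := fun k => Nat.rec (motive := fun _ => ∀ n, E n) x₀ next k
  have seq_P : ∀ k, P k (seq k) := by
    intro k
    induction k with
    | zero => exact h₀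
    | succ k ih => exact next_P k _ ih
  have seq_mem : ∀ k j, k ≤ j → seq j ∈ cylinder (seq k) k := by
    intro k j hkj
    induction j, hkj using Nat.le_induction with
    | base => exact self_mem_cylinder _ _
    | succ j hkj ih =>
      rw [← mem_cylinder_iff_eq.1 ih]
      exact cylinder_anti _ hkj (next_mem j _ (seq_P j))
  refine ⟨fun i => seq (i + 1) i, fun k => hP k _ _ (fun i hi => ?_) (seq_P k)⟩
  exact (seq_mem (i + 1) k hi i (Nat.lt_succ_self i)).symm

theorem PiNat.exists_cylinder_subset_of_mem_isOpen {E : ℕ → Type*}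
    [∀ n, TopologicalSpace (E n)] [∀ n, DiscreteTopology (E n)] {U : Set (∀ n, E n)}
    (hU : IsOpen U) {x : ∀ n, E n} (hx : x ∈ U) : ∃ k, cylinder x k ⊆ U := by
  obtain ⟨_, ⟨y, k, rfl⟩, hxy, hyU⟩ :=
    (isTopologicalBasis_cylinders E).exists_subset_of_mem_open hx hU
  exact ⟨k, (mem_cylinder_iff_eq.1 hxy).symm ▸ hyU⟩

theorem IsCompact.exists_forall_cylinder_subset {E : ℕ → Type*}
    [∀ n, TopologicalSpace (E n)] [∀ n, DiscreteTopology (E n)] {K U : Set (∀ n, E n)}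
    (hK : IsCompact K) (hU : IsOpen U) (hKU : K ⊆ U) : ∃ k, ∀ x ∈ K, cylinder x k ⊆ U := by
  choose! n hn using fun x (hx : x ∈ K) => exists_cylinder_subset_of_mem_isOpen hU (hKU hx)
  obtain ⟨t, htK, hKt⟩ := hK.elim_nhds_subcover (fun x => cylinder x (n x))
    fun x _ => (isOpen_cylinder E x (n x)).mem_nhds (self_mem_cylinder x (n x))
  refine ⟨t.sup n, fun x hx y hy => ?_⟩
  obtain ⟨z, hzt, hxz⟩ := mem_iUnion₂.1 (hKt hx)
  have hnz : n z ≤ t.sup n := Finset.le_sup hzt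
  refine hn z (htK z hzt) ?_
  rw [← mem_cylinder_iff_eq.1 hxz]
  exact cylinder_anti x hnz hy

lemma isCompact_Iic_nat_nat (σ : ℕ → ℕ) : IsCompact (Iic σ) := by
  simpa only [Icc_bot] using isCompact_Icc (a := ⊥) (b := σ)

def prefixBox (σ : ℕ → ℕ) (k : ℕ) : Set (ℕ → ℕ) := {x | ∀ i < k, x i ≤ σ i}

lemma prefixBox_zero (σ : ℕ → ℕ) : prefixBox σ 0 = univ := by
  ext; simp [prefixBox]

lemma prefixBox_congr {σ τ : ℕ → ℕ} {k : ℕ} (h : τ ∈ cylinder σ k) :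
    prefixBox τ k = prefixBox σ k := by
  ext x
  simp only [prefixBox, mem_ofPred_eq]
  exact forall₂_congr fun i hi => by rw [h i hi]

lemma monotone_prefixBox_update (σ : ℕ → ℕ) (k : ℕ) :
    Monotone fun m => prefixBox (update σ k m) (k + 1) := by
  intro m m' hm x hx i hi
  rcases eq_or_ne i k with rfl | hik
  · have hxi := hx i hi
    simp only [update_self] at hxi ⊢
    exact hxi.trans hm
  · simpa [hik] using hx i hi

lemma prefixBox_eq_iUnion (σ : ℕ → ℕ) (k : ℕ) :
    prefixBox σ k = ⋃ m, prefixBox (update σ k m) (k + 1) := by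
  ext x
  simp only [prefixBox, mem_ofPred_eq, mem_iUnion]
  constructor
  · intro hx
    refine ⟨x k, fun i hi => ?_⟩
    rcases eq_or_ne i k with rfl | hik
    · simp
    · simpa [hik] using hx i (by omega)
  · rintro ⟨m, hm⟩ i hi
    simpa [hi.ne] using hm i (by omega)

lemma exists_prefixBox_subset_of_isOpen {σ : ℕ → ℕ} {U : Set (ℕ → ℕ)} (hU : IsOpen U)
    (hσU : Iic σ ⊆ U) : ∃ k, prefixBox σ k ⊆ U := by
  obtain ⟨k, hk⟩ := (isCompact_Iic_nat_nat σ).exists_forall_cylinder_subset hU hσU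
  refine ⟨k, fun x hx => hk (x ⊓ σ) (inf_le_right : x ⊓ σ ≤ σ) ?_⟩
  exact fun i hi => (min_eq_left (hx i hi)).symm

lemma iInter_closure_image_prefixBox_subset {Z : Type*} [TopologicalSpace Z] [T2Space Z]
    {h : (ℕ → ℕ) → Z} (hh : Continuous h) (σ : ℕ → ℕ) :
    ⋂ k, closure (h '' prefixBox σ k) ⊆ h '' Iic σ := by
  intro z hz
  by_contra hzσ
  have hcomp : IsCompact (h '' Iic σ) := (isCompact_Iic_nat_nat σ).image hh
  obtain ⟨U, V, hU, hV, hσU, hzV, hUV⟩ :=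
    SeparatedNhds.of_isCompact_isCompact hcomp isCompact_singleton
      (disjoint_singleton_right.2 hzσ)
  obtain ⟨k, hk⟩ := exists_prefixBox_subset_of_isOpen (hU.preimage hh)
    (image_subset_iff.1 hσU)
  have : z ∈ closure U := closure_mono (image_subset_iff.2 hk) (mem_iInter.1 hz k)
  exact (hUV.closure_left hV).notMem_of_mem_left this (hzV rfl)

theorem exists_isCompact_le_measure_image {Z : Type*} [TopologicalSpace Z] [T2Space Z]
    [MeasurableSpace Z] [OpensMeasurableSpace Z] (μ : Measure Z) [IsFiniteMeasure μ]
    {h : (ℕ → ℕ) → Z} (hh : Continuous h) {c : ℝ≥0∞} (hc : c < μ (range h)) :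
    ∃ K, IsCompact K ∧ c ≤ μ (h '' K) := by
  obtain ⟨σ, hσ⟩ : ∃ σ, ∀ k, c < μ (h '' prefixBox σ k) := by
    refine exists_forall_of_exists_mem_cylinder (fun k σ τ hτ hk => by rwa [prefixBox_congr hτ])
      (x₀ := 0) (by rwa [prefixBox_zero, image_univ]) fun k σ hk => ?_
    have hmono : Monotone fun m => h '' prefixBox (update σ k m) (k + 1) :=
      fun m m' hm => image_mono (monotone_prefixBox_update σ k hm)
    rw [prefixBox_eq_iUnion, image_iUnion, hmono.measure_iUnion, lt_iSup_iff] at hk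
    obtain ⟨m, hm⟩ := hk
    exact ⟨update σ k m, update_mem_cylinder σ k m, hm⟩
  refine ⟨Iic σ, isCompact_Iic_nat_nat σ, ?_⟩
  have hanti : Antitone fun k => closure (h '' prefixBox σ k) := fun k l hkl =>
    closure_mono (image_mono fun x hx i hi => hx i (hi.trans_le hkl))
  calc c ≤ ⨅ k, μ (closure (h '' prefixBox σ k)) :=
        le_iInf fun k => (hσ k).le.trans (measure_mono subset_closure)
    _ = μ (⋂ k, closure (h '' prefixBox σ k)) :=
        (hanti.measure_iInter (fun k => isClosed_closure.nullMeasurableSet)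
          ⟨0, measure_ne_top _ _⟩).symm
    _ ≤ μ (h '' Iic σ) := measure_mono (iInter_closure_image_prefixBox_subset hh σ)

theorem MeasureTheory.AnalyticSet.nullMeasurableSet {Z : Type*} [TopologicalSpace Z] [T2Space Z]
    [MeasurableSpace Z] [OpensMeasurableSpace Z] {s : Set Z} (hs : AnalyticSet s)
    (μ : Measure Z) [IsFiniteMeasure μ] : NullMeasurableSet s μ := by
  rw [AnalyticSet] at hs
  obtain rfl | ⟨h, hh, rfl⟩ := hs
  · exact nullMeasurableSet_empty
  obtain h0 | h0 := eq_zero_or_pos (μ (range h))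
  · exact NullMeasurableSet.of_null h0
  obtain ⟨u, -, hu, hu_lim⟩ := exists_seq_strictMono_tendsto' h0
  choose K hK hKμ using fun n => exists_isCompact_le_measure_image μ hh (hu n).2
  have hB : MeasurableSet (⋃ n, h '' K n) :=
    .iUnion fun n => ((hK n).image hh).isClosed.measurableSet
  have hBμ : μ (range h) ≤ μ (⋃ n, h '' K n) :=
    le_of_tendsto' hu_lim fun n =>
      (hKμ n).trans (measure_mono (subset_iUnion (fun n => h '' K n) n))
  exact hB.nullMeasurableSet.congr <| ae_eq_of_subset_of_measure_ge
    (iUnion_subset fun n => image_subset_range h (K n)) hBμ hB.nullMeasurableSet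
    (measure_ne_top _ _)

theorem measurable_of_measurableSet_preimage_cylinder {α : Type*} {m : MeasurableSpace α}
    {s : α → ℕ → ℕ} (hs : ∀ (w : ℕ → ℕ) (k : ℕ), MeasurableSet (s ⁻¹' cylinder w k)) :
    Measurable s := by
  refine measurable_pi_lambda _ fun k => measurable_to_countable' fun a => ?_
  have : (fun y => s y k) ⁻¹' {a} =
      ⋃ v : Fin k → ℕ, s ⁻¹' cylinder (fun i => if hi : i < k then v ⟨i, hi⟩ else a) (k + 1) := by
    ext y
    simp only [mem_preimage, mem_singleton_iff, mem_iUnion, mem_cylinder_iff]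
    constructor
    · rintro rfl
      refine ⟨fun i => s y i, fun i hi => ?_⟩
      rcases Nat.lt_succ_iff_lt_or_eq.1 hi with hi | rfl <;> simp [*]
    · rintro ⟨v, hv⟩
      simpa using hv k (Nat.lt_succ_self k)
  rw [this]
  exact .iUnion fun v => hs _ _

/-- Greedy coordinatewise minimum; for nonempty closed `C` it is the lexicographically least
element of `C`. -/
noncomputable def lexMin (C : Set (ℕ → ℕ)) (k : ℕ) : ℕ :=
  sInf ((fun x => x k) '' {x ∈ C | ∀ i < k, x i = lexMin C i})

lemma lexMin_eq (C : Set (ℕ → ℕ)) (k : ℕ) :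
    lexMin C k = sInf ((fun x => x k) '' (C ∩ cylinder (lexMin C) k)) := by
  rw [lexMin]; rfl

lemma lexMin_empty : lexMin ∅ = 0 :=
  funext fun k => by simp [lexMin_eq ∅ k]

lemma lexMin_le {C : Set (ℕ → ℕ)} {x : ℕ → ℕ} {k : ℕ} (hx : x ∈ C ∩ cylinder (lexMin C) k) :
    lexMin C k ≤ x k := by
  rw [lexMin_eq]
  exact Nat.sInf_le ⟨x, hx, rfl⟩

lemma inter_cylinder_lexMin_nonempty {C : Set (ℕ → ℕ)} (hC : C.Nonempty) :
    ∀ k, (C ∩ cylinder (lexMin C) k).Nonempty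
  | 0 => by simpa [cylinder_zero]
  | k + 1 => by
    obtain ⟨x, hx, hxk⟩ :=
      Nat.sInf_mem ((inter_cylinder_lexMin_nonempty hC k).image fun x => x k)
    refine ⟨x, hx.1, fun i hi => ?_⟩
    rcases Nat.lt_succ_iff_lt_or_eq.1 hi with hi | rfl
    · exact hx.2 i hi
    · exact hxk.trans (lexMin_eq C i).symm

theorem IsClosed.lexMin_mem {C : Set (ℕ → ℕ)} (hC : IsClosed C) (hne : C.Nonempty) :
    lexMin C ∈ C := by
  refine hC.closure_subset ((isTopologicalBasis_cylinders fun _ => ℕ).mem_closure_iff.2 ?_)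
  rintro _ ⟨x, k, rfl⟩ hx
  rw [← mem_cylinder_iff_eq.1 hx, inter_comm]
  exact inter_cylinder_lexMin_nonempty hne k

theorem lexMin_mem_cylinder_iff {C : Set (ℕ → ℕ)} (hC : C.Nonempty) {w : ℕ → ℕ} {k : ℕ} :
    lexMin C ∈ cylinder w k ↔ (C ∩ cylinder w k).Nonempty ∧
      ∀ j < k, ∀ n < w j, ¬(C ∩ cylinder (update w j n) (j + 1)).Nonempty := by
  constructor
  · intro hw
    refine ⟨mem_cylinder_iff_eq.1 hw ▸ inter_cylinder_lexMin_nonempty hC k, ?_⟩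
    rintro j hj n hn ⟨x, hxC, hxw⟩
    have hxj : x ∈ C ∩ cylinder (lexMin C) j := ⟨hxC, fun i hi => by
      have := hxw i (by omega)
      rw [update_of_ne hi.ne] at this
      rw [this, hw i (by omega)]⟩
    have hxn : x j = n := by simpa using hxw j (Nat.lt_succ_self j)
    have hle : lexMin C j ≤ x j := lexMin_le hxj
    have hwj : lexMin C j = w j := hw j hj
    omega
  · rintro ⟨⟨x, hxC, hxw⟩, hmin⟩ i
    induction i using Nat.strong_induction_on with
    | _ i ih =>
    intro hi
    have hxi : x ∈ C ∩ cylinder (lexMin C) i :=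
      ⟨hxC, fun m hm => (hxw m (hm.trans hi)).trans (ih m hm (hm.trans hi)).symm⟩
    have hle : lexMin C i ≤ w i := (lexMin_le hxi).trans_eq (hxw i hi)
    refine hle.antisymm (not_lt.1 fun hlt => hmin i hi _ hlt ?_)
    obtain ⟨y, hyC, hy⟩ := inter_cylinder_lexMin_nonempty hC (i + 1)
    refine ⟨y, hyC, fun m hm => ?_⟩
    rcases Nat.lt_succ_iff_lt_or_eq.1 hm with hm | rfl
    · rw [update_of_ne hm.ne, hy m (hm.trans (Nat.lt_succ_self i)), ih m hm (hm.trans hi)]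
    · rw [update_self, hy m hm]

section LexMinSection

variable {Y : Type*}

noncomputable def lexMinSection (h : (ℕ → ℕ) → Y) (y : Y) : ℕ → ℕ := lexMin (h ⁻¹' {y})

lemma lexMinSection_spec [TopologicalSpace Y] [T1Space Y] {h : (ℕ → ℕ) → Y}
    (hh : Continuous h) {y : Y} (hy : y ∈ range h) : h (lexMinSection h y) = y :=
  (isClosed_singleton.preimage hh).lexMin_mem hy

lemma lexMinSection_of_notMem {h : (ℕ → ℕ) → Y} {y : Y} (hy : y ∉ range h) :
    lexMinSection h y = 0 := by
  rw [lexMinSection, preimage_singleton_eq_empty.2 hy, lexMin_empty]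

lemma lexMinSection_preimage_cylinder_inter_range (h : (ℕ → ℕ) → Y) (w : ℕ → ℕ) (k : ℕ) :
    lexMinSection h ⁻¹' cylinder w k ∩ range h =
      h '' cylinder w k ∩ ⋂ j < k, ⋂ n < w j, (h '' cylinder (update w j n) (j + 1))ᶜ := by
  ext y
  have hfiber : ∀ A, (h ⁻¹' {y} ∩ A).Nonempty ↔ y ∈ h '' A := fun A =>
    ⟨fun ⟨x, hx, hxA⟩ => ⟨x, hxA, hx⟩, fun ⟨x, hxA, hx⟩ => ⟨x, hx, hxA⟩⟩
  simp only [mem_inter_iff, mem_preimage, mem_iInter, mem_compl_iff]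
  constructor
  · rintro ⟨hs, hy⟩
    rw [lexMinSection, lexMin_mem_cylinder_iff (C := h ⁻¹' {y}) hy] at hs
    simpa only [hfiber] using hs
  · rintro ⟨hy, hmin⟩
    refine ⟨?_, image_subset_range h _ hy⟩
    rw [lexMinSection, lexMin_mem_cylinder_iff (C := h ⁻¹' {y}) (image_subset_range h _ hy)]
    simpa only [hfiber] using ⟨hy, hmin⟩

theorem nullMeasurable_lexMinSection [TopologicalSpace Y] [T2Space Y] [MeasurableSpace Y]
    [OpensMeasurableSpace Y] {h : (ℕ → ℕ) → Y} (hh : Continuous h) (ν : Measure Y)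
    [IsFiniteMeasure ν] : NullMeasurable (lexMinSection h) ν := by
  have himage : ∀ (w : ℕ → ℕ) (k : ℕ), NullMeasurableSet (h '' cylinder w k) ν := fun w k =>
    ((isOpen_cylinder _ w k).analyticSet_image hh).nullMeasurableSet ν
  have hrange : NullMeasurableSet (range h) ν :=
    (analyticSet_range_of_polishSpace hh).nullMeasurableSet ν
  suffices ∀ (w : ℕ → ℕ) (k : ℕ), NullMeasurableSet (lexMinSection h ⁻¹' cylinder w k) ν from
    measurable_of_measurableSet_preimage_cylinder
      (m := NullMeasurableSpace.instMeasurableSpace) this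
  intro w k
  have hoff : lexMinSection h ⁻¹' cylinder w k \ range h =
      {_y | (0 : ℕ → ℕ) ∈ cylinder w k} ∩ (range h)ᶜ := by
    ext y
    by_cases hy : y ∈ range h <;> simp [hy, lexMinSection_of_notMem]
  rw [← inter_union_sdiff (lexMinSection h ⁻¹' cylinder w k) (range h),
    lexMinSection_preimage_cylinder_inter_range, hoff]
  exact ((himage w k).inter (.iInter fun j => .iInter fun _ => .iInter fun n => .iInter fun _ =>
    (himage _ _).compl)).union ((MeasurableSet.const _).nullMeasurableSet.inter hrange.compl)

theorem Continuous.exists_measurable_ae_section [TopologicalSpace Y] [T2Space Y]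
    [MeasurableSpace Y] [OpensMeasurableSpace Y] {h : (ℕ → ℕ) → Y} (hh : Continuous h)
    (ν : Measure Y) [IsFiniteMeasure ν] :
    ∃ s : Y → ℕ → ℕ, Measurable s ∧ ∀ᵐ y ∂ν, y ∈ range h → h (s y) = y := by
  have hs := (nullMeasurable_lexMinSection hh ν).aemeasurable
  refine ⟨hs.mk _, hs.measurable_mk, ?_⟩
  filter_upwards [hs.ae_eq_mk] with y hy hyr
  rw [← hy]
  exact lexMinSection_spec hh hyr

end LexMinSection

theorem Measurable.exists_nat_nat_continuous_surjective_comp_continuous {X Y : Type*}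
    [TopologicalSpace X] [PolishSpace X] [MeasurableSpace X] [BorelSpace X] [Nonempty X]
    [TopologicalSpace Y] [MeasurableSpace Y] [OpensMeasurableSpace Y] {f : X → Y}
    [SecondCountableTopology (range f)] (hf : Measurable f) :
    ∃ g : (ℕ → ℕ) → X, Continuous g ∧ Surjective g ∧ Continuous (f ∘ g) := by
  obtain ⟨t', ht', hft', ht'P⟩ := hf.exists_continuous
  obtain ⟨g, hg, hgs⟩ := @PolishSpace.exists_nat_nat_continuous_surjective X t' ht'P _
  exact ⟨g, continuous_le_rng ht' hg, hgs, hft'.comp hg⟩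

/-- **Measured Borel sections and universal measurability of images**
(Lemma `lemma:measured:section`): a Borel map `f` from a standard Borel (Polish) space
into a second-countable Hausdorff space admits, for every Borel probability measure `μ`
on the domain, a Borel section `σ` with `f (σ y) = y` for `f_*μ`-almost all `y`;
moreover the image `f(𝐗) = range f` is universally measurable. -/
theorem measured_section_and_universally_measurable_image
    {Xs : Type*} [TopologicalSpace Xs] [PolishSpace Xs] [MeasurableSpace Xs] [BorelSpace Xs]
    {Ys : Type*} [TopologicalSpace Ys] [SecondCountableTopology Ys] [T2Space Ys]
    [MeasurableSpace Ys] [BorelSpace Ys]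
    (f : Xs → Ys) (hf : Measurable f) :
    (∀ μ : Measure Xs, IsProbabilityMeasure μ →
      ∃ σ : Ys → Xs, Measurable σ ∧ ∀ᵐ y ∂(Measure.map f μ), f (σ y) = y) ∧
    (∀ ν : Measure Ys, IsProbabilityMeasure ν → NullMeasurableSet (Set.range f) ν) := by
  have hrange : AnalyticSet (range f) := by
    simpa only [image_univ] using MeasurableSet.univ.analyticSet_image hf
  refine ⟨fun μ _ => ?_, fun ν _ => hrange.nullMeasurableSet ν⟩
  have := nonempty_of_isProbabilityMeasure μ
  obtain ⟨g, hg, hgs, hfg⟩ := hf.exists_nat_nat_continuous_surjective_comp_continuous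
  obtain ⟨s, hs, hsec⟩ := hfg.exists_measurable_ae_section (μ.map f)
  have hae_range : ∀ᵐ y ∂μ.map f, y ∈ range f := by
    rw [ae_iff, ← compl_def, Measure.map_apply₀ hf.aemeasurable (hrange.nullMeasurableSet _).compl,
      preimage_compl, preimage_range, compl_univ, measure_empty]
  refine ⟨g ∘ s, hg.measurable.comp hs, ?_⟩
  filter_upwards [hsec, hae_range] with y hy hyf
  exact hy (hgs.range_comp f ▸ hyf)
end

section
/- Suppose the asymptotic frequency p(m) exists for every m ∈ ℕ and Σ_{m∈ℕ} p(m) = 1. Then for every k ≥ 1 and every x ∈ ℕ^k, lim_{n→∞} q_n(x) = ∏_{i=0}^{k−1} p(x(i)); that is, the prefix densities of uniform subsequence sampling factorize as products of the asymptotic frequencies. -/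
open Filter Topology

/-- The empirical frequency of the value `m` among the first `n` entries of `y`. -/
noncomputable def seqFreq (y : ℕ → ℕ) (m : ℕ) (n : ℕ) : ℝ :=
  (((Finset.range n).filter fun j => y j = m).card : ℝ) / (n : ℝ)

/-- The probability that `k` entries of `(y 0, …, y (n-1))`, sampled uniformly without
replacement, equal `x`. -/
noncomputable def sampleProb (y : ℕ → ℕ) (k : ℕ) (x : Fin k → ℕ) (n : ℕ) : ℝ :=
  (Nat.card {ι : Fin k → Fin n // Function.Injective ι ∧ ∀ i, y (ι i) = x i} : ℝ) /
    (n.descFactorial k : ℝ)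

/-- The count of entries equal to `m` among the first `n` entries. -/
def cntPD (y : ℕ → ℕ) (m n : ℕ) : ℕ := ((Finset.range n).filter fun j => y j = m).card

/-- The number of earlier indices with the same value. -/
def rnkPD {k : ℕ} (x : Fin k → ℕ) (i : Fin k) : ℕ :=
  (Finset.univ.filter fun j : Fin k => (j : ℕ) < (i : ℕ) ∧ x j = x i).card

lemma cntPD_eq_filter_univ (y : ℕ → ℕ) (m n : ℕ) :
    cntPD y m n = ((Finset.univ : Finset (Fin n)).filter fun j : Fin n => y (j : ℕ) = m).card := by
  classical
  have h1 : cntPD y m n = ∑ j ∈ Finset.range n, if y j = m then 1 else 0 :=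
    Finset.card_filter _ _
  have h2 : ((Finset.univ : Finset (Fin n)).filter fun j : Fin n => y (j : ℕ) = m).card
      = ∑ j : Fin n, if y (j : ℕ) = m then 1 else 0 := Finset.card_filter _ _
  rw [h1, h2, Fin.sum_univ_eq_sum_range (fun j => if y j = m then 1 else 0) n]

lemma snoc_injective {k n : ℕ} {f : Fin k → Fin n} {a : Fin n}
    (hf : Function.Injective f) (ha : ∀ i, f i ≠ a) :
    Function.Injective (Fin.snoc f a) := by
  intro u v h
  induction u using Fin.lastCases with
  | last =>
    induction v using Fin.lastCases with
    | last => rfl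
    | cast v =>
      rw [Fin.snoc_last, Fin.snoc_castSucc] at h
      exact absurd h.symm (ha v)
  | cast u =>
    induction v using Fin.lastCases with
    | last =>
      rw [Fin.snoc_last, Fin.snoc_castSucc] at h
      exact absurd h (ha u)
    | cast v =>
      rw [Fin.snoc_castSucc, Fin.snoc_castSucc] at h
      exact congrArg Fin.castSucc (hf h)

lemma fiber_card (y : ℕ → ℕ) (n k v : ℕ) (f : Fin k → Fin n)
    (hf : Function.Injective f) :
    Nat.card {j : Fin n // y (j : ℕ) = v ∧ ∀ i, f i ≠ j}
      = cntPD y v n - (Finset.univ.filter fun i : Fin k => y (f i : ℕ) = v).card := by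
  classical
  rw [Nat.card_eq_fintype_card, Fintype.card_subtype]
  have hset : (Finset.univ.filter fun j : Fin n => y (j : ℕ) = v ∧ ∀ i, f i ≠ j)
      = (Finset.univ.filter fun j : Fin n => y (j : ℕ) = v) \
        ((Finset.univ.filter fun i : Fin k => y (f i : ℕ) = v).image f) := by
    ext j
    simp only [Finset.mem_filter, Finset.mem_univ, true_and, Finset.mem_sdiff,
      Finset.mem_image]
    constructor
    · rintro ⟨h1, h2⟩
      refine ⟨h1, ?_⟩
      rintro ⟨i, _, hfi⟩
      exact h2 i hfi
    · rintro ⟨h1, h2⟩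
      refine ⟨h1, fun i hfi => h2 ?_⟩
      have hv : y ((f i : Fin n) : ℕ) = v := by rw [hfi]; exact h1
      exact ⟨i, hv, hfi⟩
  rw [hset, Finset.card_sdiff_of_subset, Finset.card_image_of_injective _ hf,
    ← cntPD_eq_filter_univ]
  · intro j hj
    simp only [Finset.mem_image, Finset.mem_filter, Finset.mem_univ, true_and] at hj ⊢
    obtain ⟨i, hi, rfl⟩ := hj
    exact hi

lemma rnkPD_castSucc {k : ℕ} (x : Fin (k + 1) → ℕ) (i : Fin k) :
    rnkPD x (Fin.castSucc i) = rnkPD (fun j => x (Fin.castSucc j)) i := by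
  classical
  unfold rnkPD
  rw [Finset.card_filter, Finset.card_filter, Fin.sum_univ_castSucc]
  have h : ¬(((Fin.last k : Fin (k+1)) : ℕ) < ((Fin.castSucc i : Fin (k+1)) : ℕ) ∧
      x (Fin.last k) = x (Fin.castSucc i)) := by
    simp only [Fin.val_last, Fin.coe_castSucc]
    rintro ⟨h1, -⟩
    exact absurd h1 (Nat.lt_asymm i.2)
  rw [if_neg h, add_zero]
  refine Finset.sum_congr rfl fun j _ => ?_
  simp only [Fin.coe_castSucc]

lemma rnkPD_last {k : ℕ} (x : Fin (k + 1) → ℕ) :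
    rnkPD x (Fin.last k)
      = (Finset.univ.filter fun i : Fin k => x (Fin.castSucc i) = x (Fin.last k)).card := by
  classical
  unfold rnkPD
  rw [Finset.card_filter, Finset.card_filter, Fin.sum_univ_castSucc]
  simp only [Fin.val_last, Fin.coe_castSucc, lt_self_iff_false, false_and, if_false, add_zero]
  refine Finset.sum_congr rfl fun j _ => ?_
  simp [j.2]

/-- The combinatorial equivalence splitting off the last coordinate. -/
def splitEquiv (y : ℕ → ℕ) (n k : ℕ) (x : Fin (k + 1) → ℕ) :
    {ι : Fin (k + 1) → Fin n // Function.Injective ι ∧ ∀ i, y (ι i : ℕ) = x i} ≃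
      Σ ι0 : {ι : Fin k → Fin n // Function.Injective ι ∧
          ∀ i, y (ι i : ℕ) = x (Fin.castSucc i)},
        {j : Fin n // y (j : ℕ) = x (Fin.last k) ∧ ∀ i, ι0.1 i ≠ j} where
  toFun ι := ⟨⟨Fin.init ι.1,
      fun a b h => Fin.castSucc_injective k (ι.2.1 h),
      fun i => ι.2.2 (Fin.castSucc i)⟩,
    ⟨ι.1 (Fin.last k), ι.2.2 (Fin.last k),
      fun i h => by
        have := ι.2.1 h
        exact absurd this (Fin.castSucc_lt_last i).ne⟩⟩
  invFun z := ⟨Fin.snoc z.1.1 z.2.1,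
    ⟨snoc_injective z.1.2.1 z.2.2.2, by
      intro i
      induction i using Fin.lastCases with
      | last => rw [Fin.snoc_last]; exact z.2.2.1
      | cast i => rw [Fin.snoc_castSucc]; exact z.1.2.2 i⟩⟩
  left_inv ι := by
    ext i
    simp [Fin.snoc_init_self]
  right_inv z := by
    obtain ⟨⟨f, hf⟩, ⟨j, hj⟩⟩ := z
    have hfst : Fin.init (Fin.snoc f j : Fin (k+1) → Fin n) = f := by simp
    refine Sigma.ext (Subtype.ext hfst) ?_
    refine (Subtype.heq_iff_coe_eq ?_).mpr ?_
    · intro u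
      simp only [hfst]
    · simp

lemma count_eq (y : ℕ → ℕ) : ∀ (k n : ℕ) (x : Fin k → ℕ),
    Nat.card {ι : Fin k → Fin n // Function.Injective ι ∧ ∀ i, y (ι i : ℕ) = x i}
      = ∏ i : Fin k, (cntPD y (x i) n - rnkPD x i) := by
  intro k
  induction k with
  | zero =>
    intro n x
    rw [Finset.univ_eq_empty, Finset.prod_empty]
    rw [Nat.card_eq_one_iff_unique.mpr]
    constructor
    · constructor
      intro a b
      ext i
      exact absurd i.2 (Nat.not_lt_zero _)
    · exact ⟨⟨Fin.elim0, fun a => a.elim0, fun i => i.elim0⟩⟩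
  | succ k ih =>
    intro n x
    classical
    rw [Nat.card_congr (splitEquiv y n k x)]
    rw [Nat.card_eq_fintype_card, Fintype.card_sigma]
    have hfib : ∀ ι0 : {ι : Fin k → Fin n // Function.Injective ι ∧
        ∀ i, y (ι i : ℕ) = x (Fin.castSucc i)},
        Fintype.card {j : Fin n // y (j : ℕ) = x (Fin.last k) ∧ ∀ i, ι0.1 i ≠ j}
          = cntPD y (x (Fin.last k)) n - rnkPD x (Fin.last k) := by
      intro ι0
      rw [← Nat.card_eq_fintype_card, fiber_card y n k _ ι0.1 ι0.2.1, rnkPD_last]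
      congr 2
      apply Finset.filter_congr
      intro i _
      rw [ι0.2.2 i]
    rw [Finset.sum_congr rfl fun ι0 _ => hfib ι0, Finset.sum_const, Finset.card_univ,
      ← Nat.card_eq_fintype_card, ih n (fun i => x (Fin.castSucc i)),
      Fin.prod_univ_castSucc, smul_eq_mul]
    congr 1
    apply Finset.prod_congr rfl
    intro i _
    rw [rnkPD_castSucc]

lemma tendsto_sub_div (y : ℕ → ℕ) (p : ℕ → ℝ) (m : ℕ)
    (hp : Tendsto (fun n => seqFreq y m n) atTop (𝓝 (p m))) (r : ℕ) :
    Tendsto (fun n : ℕ => ((cntPD y m n - r : ℕ) : ℝ) / (n : ℝ)) atTop (𝓝 (p m)) := by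
  have h0 : Tendsto (fun n : ℕ => (r : ℝ) / (n : ℝ)) atTop (𝓝 0) :=
    tendsto_const_nhds.div_atTop tendsto_natCast_atTop_atTop
  have hlow : Tendsto (fun n : ℕ => seqFreq y m n - (r : ℝ) / (n : ℝ)) atTop (𝓝 (p m)) := by
    simpa using hp.sub h0
  refine tendsto_of_tendsto_of_tendsto_of_le_of_le' hlow hp ?_ ?_
  · filter_upwards with n
    have key : (cntPD y m n : ℝ) - (r : ℝ) ≤ ((cntPD y m n - r : ℕ) : ℝ) := by
      rcases le_total r (cntPD y m n) with h | h
      · rw [Nat.cast_sub h]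
      · have h0' : cntPD y m n - r = 0 := Nat.sub_eq_zero_of_le h
        have hcr : (cntPD y m n : ℝ) ≤ (r : ℝ) := by exact_mod_cast h
        rw [h0']
        push_cast
        linarith
    have heq : seqFreq y m n - (r : ℝ) / (n : ℝ) = ((cntPD y m n : ℝ) - (r : ℝ)) / (n : ℝ) := by
      unfold seqFreq cntPD
      rw [sub_div]
    rw [heq]
    exact div_le_div_of_nonneg_right key (Nat.cast_nonneg n)
  · filter_upwards with n
    have key : ((cntPD y m n - r : ℕ) : ℝ) ≤ (cntPD y m n : ℝ) := by
      exact_mod_cast Nat.sub_le _ _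
    exact div_le_div_of_nonneg_right key (Nat.cast_nonneg n)

lemma tendsto_factor (y : ℕ → ℕ) (p : ℕ → ℝ) (m : ℕ)
    (hp : Tendsto (fun n => seqFreq y m n) atTop (𝓝 (p m))) (r i : ℕ) :
    Tendsto (fun n : ℕ => ((cntPD y m n - r : ℕ) : ℝ) / ((n - i : ℕ) : ℝ))
      atTop (𝓝 (p m)) := by
  have h1 : Tendsto (fun n : ℕ => ((cntPD y m n - r : ℕ) : ℝ) / (n : ℝ)) atTop (𝓝 (p m)) :=
    tendsto_sub_div y p m hp r
  have h2 : Tendsto (fun n : ℕ => (n : ℝ) / ((n : ℝ) + (-(i : ℝ)))) atTop (𝓝 1) :=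
    tendsto_natCast_div_add_atTop (-(i : ℝ))
  have h3 := h1.mul h2
  rw [mul_one] at h3
  refine h3.congr' ?_
  filter_upwards [eventually_gt_atTop i] with n hn
  have hcast : ((n - i : ℕ) : ℝ) = (n : ℝ) + (-(i : ℝ)) := by
    rw [Nat.cast_sub hn.le]; ring
  rw [hcast]
  have hn0 : (n : ℝ) ≠ 0 := by
    have : 0 < n := lt_of_le_of_lt (Nat.zero_le i) hn
    exact_mod_cast this.ne'
  have hni : (n : ℝ) + (-(i : ℝ)) ≠ 0 := by
    have : (i : ℝ) < (n : ℝ) := by exact_mod_cast hn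
    intro h; linarith
  field_simp

/-- **Factorization of prefix densities**
(equation `eq:factorization:sequence:densities`): if the asymptotic frequencies `p(m)`
exist and sum to one, then the prefix densities of uniform subsequence sampling exist
and factorize: `lim_n q_n(x) = ∏ i, p (x i)`. -/
theorem prefix_densities_factorize
    (y : ℕ → ℕ) (p : ℕ → ℝ)
    (hp : ∀ m : ℕ, Tendsto (fun n => seqFreq y m n) atTop (𝓝 (p m)))
    (hsum : ∑' m : ℕ, p m = 1) :
    ∀ k : ℕ, 1 ≤ k → ∀ x : Fin k → ℕ,
      Tendsto (fun n => sampleProb y k x n) atTop (𝓝 (∏ i : Fin k, p (x i))) := by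
  intro k _ x
  have key : ∀ n : ℕ, sampleProb y k x n
      = ∏ i : Fin k, ((cntPD y (x i) n - rnkPD x i : ℕ) : ℝ) / ((n - (i : ℕ) : ℕ) : ℝ) := by
    intro n
    unfold sampleProb
    rw [count_eq y k n x, Nat.descFactorial_eq_prod_range,
      Finset.prod_div_distrib]
    push_cast
    congr 1
    rw [← Fin.prod_univ_eq_prod_range (fun i => ((n - i : ℕ) : ℝ)) k]
  simp only [key]
  exact tendsto_finset_prod _ fun i _ => tendsto_factor y p (x i) (hp (x i)) _ _
end
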